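/- arXiv:1810.11135 — 6 statements merged into one kernel-verified Lean document; each statement's English description precedes it below -/
import Mathlib

section
/- Let b be an alternately shift maximal sequence over alphabet A and Σ_b = {x ∈ A^ℕ : σ^k(x) ⪯ b, k ≥ 0}. Then a finite word w = w₁⋯w_n is in the language of Σ_b (i.e., some x ∈ Σ_b begins with w) if and only if for every 1 ≤ i ≤ n, the word w_i⋯w_n is ⪯ b₁⋯b_{n−i+1} in the alternating order restricted to finite words (i.e., either w_i⋯w_n = b₁⋯b_{n−i+1} or there is j ≤ n−i+1 with w_{i+k−1} = b_k for k < j and (−1)^j(b_j − w_{i+j−1}) < 0). -/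
def altLt (x y : ℕ → ℕ) : Prop :=
  ∃ j : ℕ, (∀ k < j, x k = y k) ∧ (-1 : ℤ) ^ (j + 1) * ((y j : ℤ) - (x j : ℤ)) < 0

def altLe (x y : ℕ → ℕ) : Prop := x = y ∨ altLt x y

def shift (x : ℕ → ℕ) : ℕ → ℕ := fun n => x (n + 1)

def AltShiftMaximal (b : ℕ → ℕ) : Prop :=
  (∀ n, b n ∈ Finset.Icc 1 (b 0)) ∧ ∀ n, altLe (shift^[n] b) b

def SigmaB (b : ℕ → ℕ) : Set (ℕ → ℕ) :=
  {x | (∀ n, x n ∈ Finset.Icc 1 (b 0)) ∧ ∀ k, altLe (shift^[k] x) b}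

lemma shift_iter : ∀ (i : ℕ) (x : ℕ → ℕ) (j : ℕ), shift^[i] x j = x (j + i) := by
  intro i
  induction i with
  | zero => intro x j; rfl
  | succ i ih =>
    intro x j
    rw [Function.iterate_succ_apply, ih (shift x) j]
    rfl

/-- A word of length `n` (given by the first `n` values of `w`) is in the language of
`Σ_b` iff every suffix is `⪯` the corresponding prefix of `b` in the (finite)
alternating order. -/
theorem language_characterization (b : ℕ → ℕ) (hb : AltShiftMaximal b)
    (n : ℕ) (hn : 1 ≤ n) (w : ℕ → ℕ) (hw : ∀ k < n, w k ∈ Finset.Icc 1 (b 0)) :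
    (∃ x ∈ SigmaB b, ∀ k < n, x k = w k) ↔
      (∀ i < n,
        (∀ k, k < n - i → w (i + k) = b k) ∨
        ∃ j, j < n - i ∧ (∀ k < j, w (i + k) = b k) ∧
          (-1 : ℤ) ^ (j + 1) * ((b j : ℤ) - (w (i + j) : ℤ)) < 0) := by
  constructor
  · rintro ⟨x, ⟨hx1, hx2⟩, hxw⟩ i hi
    rcases hx2 i with h | ⟨j, hj1, hj2⟩
    · left
      intro k hk
      have := congrFun h k
      rw [shift_iter] at this
      rw [← hxw (i + k) (by omega), show i + k = k + i by omega, this]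
    · by_cases hjn : j < n - i
      · right
        refine ⟨j, hjn, fun k hk => ?_, ?_⟩
        · rw [← hxw (i + k) (by omega), show i + k = k + i by omega,
            ← shift_iter i x k, hj1 k hk]
        · rw [← hxw (i + j) (by omega), show i + j = j + i by omega,
            ← shift_iter i x j]
          exact hj2
      · left
        intro k hk
        rw [← hxw (i + k) (by omega), show i + k = k + i by omega,
          ← shift_iter i x k, hj1 k (by omega)]
  · intro H
    classical
    set P : ℕ → Prop := fun m => ∀ k < m, w (n - m + k) = b k with hPdef
    set m := Nat.findGreatest P n with hm
    have hmn : m ≤ n := Nat.findGreatest_le n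
    have hPm : P m := Nat.findGreatest_spec (Nat.zero_le n)
      (fun k hk => absurd hk (Nat.not_lt_zero k))
    have hmax : ∀ m', m < m' → m' ≤ n → ¬ P m' := fun m' h1 h2 =>
      Nat.findGreatest_is_greatest h1 h2
    set x : ℕ → ℕ := fun k => if k < n then w k else b (k - n + m) with hx
    have keyA : ∀ k, x (n - m + k) = b k := by
      intro k
      by_cases h : n - m + k < n
      · have hk : k < m := by omega
        simp only [hx, if_pos h]
        exact hPm k hk
      · simp only [hx, if_neg h]
        congr 1
        omega
    refine ⟨x, ⟨?_, ?_⟩, ?_⟩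
    · intro k
      by_cases h : k < n
      · simpa [hx, h] using hw k h
      · simpa [hx, h] using hb.1 (k - n + m)
    · intro i
      by_cases hin : i < n - m
      · have hi : i < n := by omega
        rcases H i hi with heq | ⟨j, hj1, hj2, hj3⟩
        · exact absurd (show P (n - i) from fun k hk => by
            rw [show n - (n - i) + k = i + k by omega]; exact heq k hk)
            (hmax (n - i) (by omega) (by omega))
        · right
          refine ⟨j, fun k hk => ?_, ?_⟩
          · rw [shift_iter]
            simp only [hx, if_pos (show k + i < n by omega)]
            rw [show k + i = i + k by omega]
            exact hj2 k hk
          · rw [shift_iter]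
            simp only [hx, if_pos (show j + i < n by omega)]
            rw [show j + i = i + j by omega]
            exact hj3
      · have hd : shift^[i] x = shift^[i - (n - m)] b := by
          funext j
          rw [shift_iter, shift_iter,
            show j + i = n - m + (i - (n - m) + j) by omega, keyA]
          congr 1
          omega
        rw [hd]
        exact hb.2 _
    · intro k hk
      simp [hx, hk]
end

section
/- Let Σ_b be the subshift determined by an alternately shift maximal sequence b. For w in the language of Σ_b, let k(w) be the largest k ≥ 1 such that the last k symbols of w equal b₁⋯b_k, and k(w) = 0 if no such k exists. If w, w′ are in the language with k(w) = k(w′), then the follower sets F^w = {x ∈ Σ_b : wx ∈ Σ_b} and F^{w′} coincide. -/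
/-- The word given by the first `n` values of `w` is in the language of `Σ_b`. -/
def InLanguage (b : ℕ → ℕ) (n : ℕ) (w : ℕ → ℕ) : Prop :=
  ∃ x ∈ SigmaB b, ∀ k < n, x k = w k

/-- The last `k` symbols of the length-`n` word `w` equal `b 0 ⋯ b (k-1)`. -/
def SuffixMatch (b : ℕ → ℕ) (n : ℕ) (w : ℕ → ℕ) (k : ℕ) : Prop :=
  k ≤ n ∧ ∀ i < k, w (n - k + i) = b i

/-- `k` is the maximal length of a suffix of the length-`n` word `w` matching a prefix
of `b` (with `k = 0` if no nontrivial suffix matches). -/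
def KIs (b : ℕ → ℕ) (n : ℕ) (w : ℕ → ℕ) (k : ℕ) : Prop :=
  SuffixMatch b n w k ∧ ∀ k', SuffixMatch b n w k' → k' ≤ k

/-- Concatenation of a length-`n` word `w` with an infinite sequence `x`. -/
def concatWord (n : ℕ) (w : ℕ → ℕ) (x : ℕ → ℕ) : ℕ → ℕ :=
  fun i => if i < n then w i else x (i - n)

/-- The follower set of the length-`n` word `w`. -/
def FollowerSet (b : ℕ → ℕ) (n : ℕ) (w : ℕ → ℕ) : Set (ℕ → ℕ) :=
  {x ∈ SigmaB b | concatWord n w x ∈ SigmaB b}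

lemma shift_iter_apply (k : ℕ) (y : ℕ → ℕ) (i : ℕ) : shift^[k] y i = y (i + k) := by
  induction k generalizing y i with
  | zero => rfl
  | succ k ih =>
    rw [Function.iterate_succ_apply, ih]
    simp [shift, Nat.add_assoc]

/-- If the length-`m` suffix of `w` matches the prefix of `b`, then the corresponding
shift of `concatWord n w x` equals `concatWord m b x`. -/
lemma shift_concat_eq (b : ℕ → ℕ) (n : ℕ) (w x : ℕ → ℕ) (m : ℕ)
    (hs : SuffixMatch b n w m) :
    shift^[n - m] (concatWord n w x) = concatWord m b x := by
  obtain ⟨hmn, hmatch⟩ := hs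
  funext i
  rw [shift_iter_apply]
  by_cases hi : i < m
  · have h1 : i + (n - m) < n := by omega
    have : n - m + i = i + (n - m) := by omega
    simp only [concatWord, if_pos h1, if_pos hi]
    rw [← this, hmatch i hi]
  · have h1 : ¬ (i + (n - m) < n) := by omega
    simp only [concatWord, if_neg h1, if_neg hi]
    congr 1
    omega

/-- Membership of `wx` in `Σ_b` reduces to conditions indexed by suffix matches of `w`. -/
lemma concat_mem_iff (b : ℕ → ℕ) (n : ℕ) (w : ℕ → ℕ) (hw : InLanguage b n w)
    (x : ℕ → ℕ) (hx : x ∈ SigmaB b) :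
    concatWord n w x ∈ SigmaB b ↔
      ∀ m, SuffixMatch b n w m → altLe (concatWord m b x) b := by
  obtain ⟨y, hy, hyw⟩ := hw
  constructor
  · rintro ⟨_, H2⟩ m hs
    have := H2 (n - m)
    rwa [shift_concat_eq b n w x m hs] at this
  · intro H
    constructor
    · intro i
      by_cases hi : i < n
      · simpa [concatWord, hi, ← hyw i hi] using hy.1 i
      · simpa [concatWord, hi] using hx.1 (i - n)
    · intro j
      by_cases hj : n ≤ j
      · have heq : shift^[j] (concatWord n w x) = shift^[j - n] x := by
          funext i
          rw [shift_iter_apply, shift_iter_apply]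
          have h1 : ¬ (i + j < n) := by omega
          simp only [concatWord, if_neg h1]
          congr 1
          omega
        rw [heq]; exact hx.2 (j - n)
      · push_neg at hj
        set m := n - j with hm
        have hjm : j = n - m := by omega
        by_cases hs : SuffixMatch b n w m
        · rw [hjm, shift_concat_eq b n w x m hs]
          exact H m hs
        · -- suffix does not match: there is a discrepancy before position m
          have hmn : m ≤ n := by omega
          have : ∃ i < m, w (n - m + i) ≠ b i := by
            by_contra hcon
            push_neg at hcon
            exact hs ⟨hmn, hcon⟩
          obtain ⟨i₀, hi₀m, hi₀⟩ := this
          have hni : n - m + i₀ = i₀ + j := by omega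
          -- from y ∈ Σ_b, the shift by j of y satisfies altLe, and it is strict
          have hy2 := hy.2 j
          rcases hy2 with heq | ⟨j₀, hj₀eq, hj₀lt⟩
          · exfalso
            apply hi₀
            have : shift^[j] y i₀ = b i₀ := by rw [heq]
            rw [shift_iter_apply] at this
            rw [hni, ← hyw (i₀ + j) (by omega)]
            exact this
          · -- j₀ < m since positions before j₀ agree with b
            have hyj₀ : y (j₀ + j) ≠ b j₀ := by
              intro hcon
              rw [shift_iter_apply] at hj₀lt
              rw [hcon] at hj₀lt
              simp at hj₀lt
            have hj₀m : j₀ < m := by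
              by_contra hcon
              push_neg at hcon
              have := hj₀eq i₀ (by omega)
              rw [shift_iter_apply] at this
              apply hi₀
              rw [hni, ← hyw (i₀ + j) (by omega)]
              exact this
            right
            refine ⟨j₀, ?_, ?_⟩
            · intro i hij₀
              have h1 : i + j < n := by omega
              have := hj₀eq i hij₀
              rw [shift_iter_apply] at this
              rw [shift_iter_apply]
              simp only [concatWord, if_pos h1]
              rw [hyw (i + j) h1] at this
              exact this
            · rw [shift_iter_apply] at hj₀lt ⊢
              have h1 : j₀ + j < n := by omega
              simp only [concatWord, if_pos h1]
              rw [← hyw (j₀ + j) h1]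
              exact hj₀lt

/-- The set of suffix-match lengths is determined by the maximal one. -/
lemma suffixMatch_transfer (b : ℕ → ℕ) (n n' : ℕ) (w w' : ℕ → ℕ) (k : ℕ)
    (hk : KIs b n w k) (hk' : KIs b n' w' k) (m : ℕ)
    (hm : SuffixMatch b n w m) : SuffixMatch b n' w' m := by
  have hmk : m ≤ k := hk.2 m hm
  obtain ⟨⟨hkn, hw⟩, _⟩ := hk
  obtain ⟨⟨hkn', hw'⟩, _⟩ := hk'
  refine ⟨by omega, ?_⟩
  intro i hi
  have h1 : n' - m + i = n' - k + (k - m + i) := by omega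
  have h2 : n - m + i = n - k + (k - m + i) := by omega
  have h3 : k - m + i < k := by omega
  rw [h1, hw' _ h3]
  have := hm.2 i hi
  rw [h2, hw _ h3] at this
  exact this

theorem follower_sets_eq_of_k_eq (b : ℕ → ℕ) (hb : AltShiftMaximal b)
    (n n' : ℕ) (w w' : ℕ → ℕ) (hw : InLanguage b n w) (hw' : InLanguage b n' w')
    (k : ℕ) (hk : KIs b n w k) (hk' : KIs b n' w' k) :
    FollowerSet b n w = FollowerSet b n' w' := by
  ext x
  simp only [FollowerSet, Set.mem_setOf_eq, Set.mem_sep_iff]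
  constructor
  · rintro ⟨hx, hcx⟩
    refine ⟨hx, ?_⟩
    rw [concat_mem_iff b n' w' hw' x hx]
    rw [concat_mem_iff b n w hw x hx] at hcx
    intro m hm
    exact hcx m (suffixMatch_transfer b n' n w' w k hk' hk m hm)
  · rintro ⟨hx, hcx⟩
    refine ⟨hx, ?_⟩
    rw [concat_mem_iff b n w hw x hx]
    rw [concat_mem_iff b n' w' hw' x hx] at hcx
    intro m hm
    exact hcx m (suffixMatch_transfer b n n' w w' k hk hk' m hm)
end

section
/- Suppose β ≥ (1+√5)/2 and the (−β)-expansion d_{−β}(1) of 1 is not periodic with odd period. Then the (−β)-shift Σ_{−β} is topologically mixing: for any two words v, w in its language there exists N such that for all n ≥ N, σ^n([v]) ∩ [w] ≠ ∅. -/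
/-- The (−β)-transformation `T_{−β}(x) = −βx + ⌊βx⌋ + 1` (as a map on ℝ). -/
noncomputable def Tneg (β : ℝ) : ℝ → ℝ := fun y => -β * y + ⌊β * y⌋ + 1

/-- The (−β)-expansion digits of `x ∈ (0,1]`: `(d_{−β}(x))_i = j` iff
`T_{−β}^{i−1}(x) ∈ I_j`, which amounts to `j = ⌊β · T_{−β}^{i−1}(x)⌋ + 1`. -/
noncomputable def dExp (β : ℝ) (x : ℝ) : ℕ → ℕ :=
  fun i => (⌊β * ((Tneg β)^[i] x)⌋).toNat + 1

/-- The (−β)-shift: the closure of the set of (−β)-expansions. -/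
noncomputable def SigmaNegBeta (β : ℝ) : Set (ℕ → ℕ) :=
  closure {y | ∃ x ∈ Set.Ioc (0 : ℝ) 1, y = dExp β x}

/-!
Write `T = T_{−β}` and `f = β − ⌊β⌋ > 0`. Every `y ∈ (0,1]` has the `T`-preimage `(c + 1 − y)/β`
for each integer `c`, so images of intervals are computed branch by branch. An open interval
expands by the factor `β` until it straddles a discontinuity, where it splits into pieces
`(0, u)` and `(1 − v, 1)` with `u + v` at least `β` times its length. A piece `(1 − m, 1)` with
`β m ≤ f` lies in the last branch and goes to an interval of length `β m` at `T 1 = 1 − f`;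
splitting that one and keeping the larger piece gives a new piece at `1` of length `≥ β m`,
because `β² − β ≥ 1`. Once `β m > f`, the next image contains `(1 − f, 1]` and then a piece
`(0, (β − 1) f)`. If `⌊β⌋ = 1` these, together with the point `T 1 = 1 − f`, cover `(0, 1)`;
if `⌊β⌋ ≥ 2` the piece at `0` grows by the factor `β` every two steps. So the iterates of every
interval eventually cover `(0, 1)`, which is invariant.

Symbolically, `T` reverses orientation: the first `k` digits are constant on a one-sided
neighbourhood of `t` whose side alternates along the orbit, and the floor fails to be
left-continuous exactly where `T` takes the value `1`. Hence only an orbit hitting `1` at times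
of both parities, which would make `1` periodic with odd period, can prevent a word of the
language from being the common prefix of the expansions of a whole interval. Mixing follows:
for large `n`, the `n`-th image of the interval of `v` meets the interval of `w`.
-/

open Set Filter Topology

theorem add_one_le_sq_of_goldenRatio_le {β : ℝ} (h : Real.goldenRatio ≤ β) : β + 1 ≤ β ^ 2 := by
  nlinarith [Real.goldenRatio_sq, mul_nonneg (sub_nonneg.2 h)
    (by linarith [Real.one_lt_goldenRatio] : 0 ≤ β + Real.goldenRatio - 1)]

theorem Tneg_eq_one_sub_fract (β y : ℝ) : Tneg β y = 1 - Int.fract (β * y) := by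
  rw [Tneg, Int.fract]; ring

theorem Tneg_intCast_add_one_sub_div {β y : ℝ} (hβ : 0 < β) (c : ℤ) (hy : y ∈ Ioc 0 1) :
    Tneg β ((c + 1 - y) / β) = y := by
  have hfloor : ⌊(c : ℝ) + 1 - y⌋ = c :=
    Int.floor_eq_iff.2 ⟨by linarith [hy.2], by linarith [hy.1]⟩
  simp only [Tneg, neg_mul, mul_div_cancel₀ _ hβ.ne', hfloor]; ring

theorem dExp_add (β x : ℝ) (i n : ℕ) : dExp β x (i + n) = dExp β ((Tneg β)^[n] x) i := by
  simp only [dExp, Function.iterate_add_apply]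

def CoversLeft (a : ℝ) (s : Set ℝ) : Prop := Ioo 0 1 ∩ Iio a ⊆ s

def CoversRight (m : ℝ) (s : Set ℝ) : Prop := Ioo 0 1 ∩ Ioi (1 - m) ⊆ s

theorem CoversLeft.mono {a b : ℝ} {s : Set ℝ} (hab : a ≤ b) (h : CoversLeft b s) :
    CoversLeft a s :=
  fun _ ⟨hy, hya⟩ => h ⟨hy, lt_of_lt_of_le hya hab⟩

section Covering

variable {β : ℝ} {S : ℕ → Set ℝ}

theorem mem_succ_of_inverseBranch (hS : ∀ n, MapsTo (Tneg β) (S n) (S (n + 1))) (hβ : 0 < β)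
    (c : ℤ) {n : ℕ} {y : ℝ} (hy : y ∈ Ioc 0 1) (hx : (c + 1 - y) / β ∈ S n) : y ∈ S (n + 1) :=
  Tneg_intCast_add_one_sub_div hβ c hy ▸ hS n hx

theorem coversRight_succ_of_coversLeft (hS : ∀ n, MapsTo (Tneg β) (S n) (S (n + 1)))
    (hβ : 1 ≤ β) {a : ℝ} {n : ℕ} (hA : CoversLeft a (S n)) : CoversRight (β * a) (S (n + 1)) := by
  rintro y ⟨⟨hy0, hy1⟩, hya⟩
  have hβ0 : 0 < β := by linarith
  refine mem_succ_of_inverseBranch hS hβ0 0 ⟨hy0, hy1.le⟩ (hA ⟨⟨?_, ?_⟩, ?_⟩)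
  all_goals
    simp only [mem_Ioi, mem_Iio, Int.cast_zero, zero_add, lt_div_iff₀ hβ0, div_lt_iff₀ hβ0] at hya ⊢
    linarith

theorem Ioo_subset_succ_of_Ioo_subset (hS : ∀ n, MapsTo (Tneg β) (S n) (S (n + 1)))
    (hβ : 1 ≤ β) {n : ℕ} (h : Ioo 0 1 ⊆ S n) : Ioo 0 1 ⊆ S (n + 1) := fun y hy =>
  coversRight_succ_of_coversLeft hS hβ (a := 1) (inter_subset_left.trans h)
    ⟨hy, show 1 - β * 1 < y by linarith [hy.1]⟩

theorem Ioc_subset_succ_of_coversRight (hS : ∀ n, MapsTo (Tneg β) (S n) (S (n + 1)))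
    (hβ : 1 ≤ β) {m : ℝ} {n : ℕ} (hm : Int.fract β < β * m) (hK : CoversRight m (S n)) :
    Ioc (1 - Int.fract β) 1 ⊆ S (n + 1) := by
  rintro y ⟨hy0, hy1⟩
  have hβ0 : 0 < β := by linarith
  have hL : (1 : ℝ) ≤ ⌊β⌋ := by exact_mod_cast Int.le_floor.2 (by exact_mod_cast hβ)
  have hβL := Int.floor_add_fract β
  have hf1 := Int.fract_lt_one β
  refine mem_succ_of_inverseBranch hS hβ0 ⌊β⌋ ⟨by linarith, hy1⟩ (hK ⟨⟨?_, ?_⟩, ?_⟩)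
  all_goals
    simp only [mem_Ioi, lt_div_iff₀ hβ0, div_lt_iff₀ hβ0]
    nlinarith

theorem coversLeft_succ_of_coversRight (hS : ∀ n, MapsTo (Tneg β) (S n) (S (n + 1)))
    (hβ : 1 ≤ β) {m : ℝ} {n : ℕ} (hK : CoversRight m (S n)) :
    CoversLeft (β * m - Int.fract β) (S (n + 1)) := by
  rintro y ⟨⟨hy0, hy1⟩, hym⟩
  have hβ0 : 0 < β := by linarith
  have hL : (1 : ℝ) ≤ ⌊β⌋ := by exact_mod_cast Int.le_floor.2 (by exact_mod_cast hβ)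
  have hβL := Int.floor_add_fract β
  refine mem_succ_of_inverseBranch hS hβ0 (⌊β⌋ - 1) ⟨hy0, hy1.le⟩ (hK ⟨⟨?_, ?_⟩, ?_⟩)
  all_goals
    simp only [mem_Iio, mem_Ioi, Int.cast_sub, Int.cast_one, sub_add_cancel, lt_div_iff₀ hβ0,
      div_lt_iff₀ hβ0] at hym ⊢
    nlinarith [Int.fract_nonneg β]

theorem Ioo_subset_succ_of_coversRight (hS : ∀ n, MapsTo (Tneg β) (S n) (S (n + 1)))
    (hβ : 0 < β) {m : ℝ} {n : ℕ} (hm : β * m ≤ Int.fract β) (hK : CoversRight m (S n)) :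
    Ioo (1 - Int.fract β) (1 - Int.fract β + β * m) ⊆ S (n + 1) := by
  rintro y ⟨hy0, hy1⟩
  have hL : (0 : ℝ) ≤ ⌊β⌋ := by exact_mod_cast Int.floor_nonneg.2 hβ.le
  have hβL := Int.floor_add_fract β
  have hf1 := Int.fract_lt_one β
  refine mem_succ_of_inverseBranch hS hβ ⌊β⌋ ⟨by linarith, by linarith⟩ (hK ⟨⟨?_, ?_⟩, ?_⟩)
  all_goals
    simp only [mem_Ioi, lt_div_iff₀ hβ, div_lt_iff₀ hβ]
    nlinarith

theorem exists_Ioo_subset_succ_or_coversLeft_coversRight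
    (hS : ∀ n, MapsTo (Tneg β) (S n) (S (n + 1))) (hβ : 0 < β) {p q : ℝ} {n : ℕ}
    (h : Ioo p q ⊆ S n) :
    (β * (q - p) ≤ 1 ∧ ∃ p', Ioo p' (p' + β * (q - p)) ⊆ S (n + 1)) ∨
      ∃ u v, β * (q - p) = u + v ∧ 0 < v ∧
        CoversLeft u (S (n + 1)) ∧ CoversRight v (S (n + 1)) := by
  set c := ⌊β * p⌋
  have hc : (c : ℝ) ≤ β * p := Int.floor_le _
  have hc' : β * p < c + 1 := Int.lt_floor_add_one _
  rcases le_or_gt (β * q) (c + 1) with hq | hq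
  · refine Or.inl ⟨by linarith, c + 1 - β * q, fun y ⟨hy0, hy1⟩ => ?_⟩
    refine mem_succ_of_inverseBranch hS hβ c ⟨by linarith, by linarith⟩ (h ⟨?_, ?_⟩)
    all_goals
      simp only [lt_div_iff₀ hβ, div_lt_iff₀ hβ]
      linarith
  · refine Or.inr ⟨c + 1 - β * p, β * q - (c + 1), by ring, by linarith, ?_, ?_⟩
    · rintro y ⟨⟨hy0, hy1⟩, hyu⟩
      refine mem_succ_of_inverseBranch hS hβ c ⟨hy0, hy1.le⟩ (h ⟨?_, ?_⟩)
      all_goals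
        simp only [mem_Iio, lt_div_iff₀ hβ, div_lt_iff₀ hβ] at hyu ⊢
        linarith
    · rintro y ⟨⟨hy0, hy1⟩, hyv⟩
      refine mem_succ_of_inverseBranch hS hβ (c + 1) ⟨hy0, hy1.le⟩ (h ⟨?_, ?_⟩)
      all_goals
        simp only [mem_Ioi, Int.cast_add, Int.cast_one, lt_div_iff₀ hβ, div_lt_iff₀ hβ] at hyv ⊢
        linarith

theorem exists_coversLeft_coversRight_of_Ioo_subset (hS : ∀ n, MapsTo (Tneg β) (S n) (S (n + 1)))
    (hβ : 1 < β) {p q : ℝ} {n : ℕ} (hpq : p < q) (h : Ioo p q ⊆ S n) :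
    ∃ n' u v, β * (q - p) ≤ u + v ∧ 0 < v ∧ CoversLeft u (S n') ∧ CoversRight v (S n') := by
  obtain ⟨k, hk⟩ := pow_unbounded_of_one_lt (1 / (q - p)) hβ
  rw [div_lt_iff₀ (by linarith)] at hk
  induction k generalizing n p q with
  | zero =>
    rcases exists_Ioo_subset_succ_or_coversLeft_coversRight hS (by linarith) h with
      ⟨hlen, -⟩ | ⟨u, v, huv, hv, hu⟩
    · nlinarith
    · exact ⟨n + 1, u, v, huv.le, hv, hu⟩
  | succ k ih =>
    rcases exists_Ioo_subset_succ_or_coversLeft_coversRight hS (by linarith) h with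
      ⟨-, p', h'⟩ | ⟨u, v, huv, hv, hu⟩
    · obtain ⟨n', u, v, huv, hv, hu⟩ := ih (by nlinarith) h' (by rw [pow_succ] at hk; linarith)
      rw [add_sub_cancel_left] at huv
      exact ⟨n', u, v, by nlinarith [mul_pos (by linarith : (0 : ℝ) < β) (sub_pos.2 hpq)], hv, hu⟩
    · exact ⟨n + 1, u, v, huv.le, hv, hu⟩

theorem exists_coversRight_ge_mul (hS : ∀ n, MapsTo (Tneg β) (S n) (S (n + 1)))
    (hβ : 1 < β) (hgold : β + 1 ≤ β ^ 2) {m : ℝ} {n : ℕ} (hm : 0 < m)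
    (hmf : β * m ≤ Int.fract β) (hK : CoversRight m (S n)) :
    ∃ n' m', β * m ≤ m' ∧ CoversRight m' (S n') := by
  have hβm : 0 < β * m := by positivity
  obtain ⟨n', u, v, huv, -, hA, hK'⟩ := exists_coversLeft_coversRight_of_Ioo_subset hS hβ
    (by linarith) (Ioo_subset_succ_of_coversRight hS (by linarith) hmf hK)
  rw [add_sub_cancel_left] at huv
  rcases le_or_gt (β * m) v with hv | hv
  · exact ⟨n', v, hv, hK'⟩
  · exact ⟨n' + 1, β * u, by nlinarith, coversRight_succ_of_coversLeft hS hβ.le hA⟩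

theorem coversLeft_pow_mul (hS : ∀ n, MapsTo (Tneg β) (S n) (S (n + 1))) (hβ : 1 < β)
    (hgold : β + 1 ≤ β ^ 2) {a : ℝ} {n : ℕ} (ha : Int.fract β ≤ a) (hA : CoversLeft a (S n)) :
    ∀ k, CoversLeft (β ^ k * a) (S (n + 2 * k)) := by
  intro k
  induction k with
  | zero => simpa using hA
  | succ k ih =>
    have hb : a ≤ β ^ k * a :=
      le_mul_of_one_le_left (ha.trans' (Int.fract_nonneg β)) (one_le_pow₀ hβ.le)
    refine (coversLeft_succ_of_coversRight hS hβ.le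
      (coversRight_succ_of_coversLeft hS hβ.le ih)).mono ?_
    have := mul_le_mul_of_nonneg_right hgold (ha.trans' (Int.fract_nonneg β) |>.trans hb)
    rw [pow_succ]
    nlinarith

theorem exists_Ioo_subset_of_coversRight_of_fract_lt (hS : ∀ n, MapsTo (Tneg β) (S n) (S (n + 1)))
    (hβ : 1 < β) (hgold : β + 1 ≤ β ^ 2) (hf : 0 < Int.fract β) {m : ℝ} {n : ℕ}
    (hm : Int.fract β < β * m) (hK : CoversRight m (S n)) : ∃ n', Ioo 0 1 ⊆ S n' := by
  have hG₁ := Ioc_subset_succ_of_coversRight hS hβ.le hm hK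
  have hK₁ : CoversRight (Int.fract β) (S (n + 1)) := fun y hy => hG₁ ⟨hy.2, hy.1.2.le⟩
  have hG₂ := Ioc_subset_succ_of_coversRight hS hβ.le (by nlinarith) hK₁
  have hA₂ := coversLeft_succ_of_coversRight hS hβ.le hK₁
  have hβL := Int.floor_add_fract β
  set f := Int.fract β
  have hL1 : 1 ≤ ⌊β⌋ := Int.le_floor.2 (by exact_mod_cast hβ.le)
  rcases (show ⌊β⌋ = 1 ∨ 2 ≤ ⌊β⌋ by omega) with hL | hL
  · have hT1 : 1 - f ∈ S (n + 1 + 1) := by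
      have := hS (n + 1) (hG₁ ⟨by linarith, le_rfl⟩)
      rwa [Tneg_eq_one_sub_fract, mul_one] at this
    rw [hL, Int.cast_one] at hβL
    refine ⟨n + 1 + 1, fun y hy => ?_⟩
    rcases lt_trichotomy y (1 - f) with hy' | rfl | hy'
    · exact hA₂ ⟨hy, show y < β * f - f by nlinarith⟩
    · exact hT1
    · exact hG₂ ⟨hy', hy.2.le⟩
  · have hL' : (2 : ℝ) ≤ ⌊β⌋ := by exact_mod_cast hL
    obtain ⟨k, hk⟩ := pow_unbounded_of_one_lt (1 / (β * f - f)) hβ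
    rw [div_lt_iff₀ (by nlinarith)] at hk
    exact ⟨n + 1 + 1 + 2 * k, fun y hy =>
      coversLeft_pow_mul hS hβ hgold (by nlinarith) hA₂ k ⟨hy, show y < _ by linarith [hy.2]⟩⟩

theorem exists_Ioo_subset_of_coversRight (hS : ∀ n, MapsTo (Tneg β) (S n) (S (n + 1)))
    (hβ : 1 < β) (hgold : β + 1 ≤ β ^ 2) (hf : 0 < Int.fract β) {m : ℝ} {n : ℕ} (hm : 0 < m)
    (hK : CoversRight m (S n)) : ∃ n', Ioo 0 1 ⊆ S n' := by
  obtain ⟨N, hN⟩ := pow_unbounded_of_one_lt (Int.fract β / (β * m)) hβ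
  rw [div_lt_iff₀ (by positivity)] at hN
  induction N generalizing m n with
  | zero => exact exists_Ioo_subset_of_coversRight_of_fract_lt hS hβ hgold hf (by simpa using hN) hK
  | succ N ih =>
    rcases lt_or_ge (Int.fract β) (β * m) with hfm | hfm
    · exact exists_Ioo_subset_of_coversRight_of_fract_lt hS hβ hgold hf hfm hK
    · obtain ⟨n', m', hm', hK'⟩ := exists_coversRight_ge_mul hS hβ hgold hm hfm hK
      have hβN : 0 < β ^ N := by positivity
      refine ih (by nlinarith) hK' ?_
      have := mul_le_mul_of_nonneg_left hm' (by positivity : 0 ≤ β ^ N * β)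
      rw [pow_succ] at hN
      nlinarith

end Covering

theorem eventually_Ioo_subset_image_iterate {β p q : ℝ} (hβ : 1 < β) (hgold : β + 1 ≤ β ^ 2)
    (hf : 0 < Int.fract β) (hpq : p < q) :
    ∀ᶠ n in atTop, Ioo 0 1 ⊆ (Tneg β)^[n] '' Ioo p q := by
  set S : ℕ → Set ℝ := fun n => (Tneg β)^[n] '' Ioo p q
  have hS : ∀ n, MapsTo (Tneg β) (S n) (S (n + 1)) := by
    rintro n _ ⟨x, hx, rfl⟩
    exact ⟨x, hx, Function.iterate_succ_apply' _ _ _⟩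
  obtain ⟨n₁, -, v, -, hv, -, hK⟩ :=
    exists_coversLeft_coversRight_of_Ioo_subset hS hβ hpq (n := 0) (by simp [S])
  obtain ⟨n₂, hcov⟩ := exists_Ioo_subset_of_coversRight hS hβ hgold hf hv hK
  exact eventually_atTop.2 ⟨n₂, fun n hn =>
    Nat.le_induction hcov (fun k _ => Ioo_subset_succ_of_Ioo_subset hS hβ.le) n hn⟩

theorem Function.forall_even_or_forall_odd_iterate_ne {α : Type*} {f : α → α} {y : α}
    (hy : ∀ n, Odd n → f^[n] y ≠ y) (x : α) :
    (∀ j, Even j → f^[j] x ≠ y) ∨ ∀ j, Odd j → f^[j] x ≠ y := by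
  have key : ∀ i j, i ≤ j → f^[i] x = y → f^[j] x = y → f^[j - i] y = y := by
    intro i j hij hi hj
    rw [← hi, ← Function.iterate_add_apply, Nat.sub_add_cancel hij, hj, hi]
  by_contra! h
  obtain ⟨⟨a, ha, hxa⟩, ⟨b, hb, hxb⟩⟩ := h
  rcases le_total a b with hab | hab
  · exact hy _ (Nat.Odd.sub_even hab hb ha) (key a b hab hxa hxb)
  · exact hy _ (Nat.Even.sub_odd hab ha hb) (key b a hab hxb hxa)

section Cylinders

variable {β : ℝ}

theorem eventually_floor_eq_nhdsGT (hβ : 0 < β) (t : ℝ) : ∀ᶠ s in 𝓝[>] t, ⌊β * s⌋ = ⌊β * t⌋ := by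
  have ht : t < (⌊β * t⌋ + 1) / β := by
    rw [lt_div_iff₀ hβ]; linarith [Int.lt_floor_add_one (β * t)]
  filter_upwards [Ioo_mem_nhdsGT ht] with s ⟨hts, hs⟩
  rw [lt_div_iff₀ hβ] at hs
  exact Int.floor_eq_iff.2 ⟨by nlinarith [Int.floor_le (β * t)], by linarith⟩

theorem eventually_floor_eq_nhdsLT (hβ : 0 < β) {t : ℝ} (ht : Tneg β t ≠ 1) :
    ∀ᶠ s in 𝓝[<] t, ⌊β * s⌋ = ⌊β * t⌋ := by
  have hlt : (⌊β * t⌋ : ℝ) < β * t := by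
    refine (Int.floor_le _).lt_of_ne fun h => ht ?_
    simp only [Tneg]
    linarith
  have ht' : ⌊β * t⌋ / β < t := by rw [div_lt_iff₀ hβ]; linarith
  filter_upwards [Ioo_mem_nhdsLT ht'] with s ⟨hs, hst⟩
  rw [div_lt_iff₀ hβ] at hs
  exact Int.floor_eq_iff.2 ⟨by linarith, by nlinarith [Int.lt_floor_add_one (β * t)]⟩

theorem Tneg_eventuallyEq_of_floor_eq {l : Filter ℝ} {t : ℝ} (h : ∀ᶠ s in l, ⌊β * s⌋ = ⌊β * t⌋) :
    Tneg β =ᶠ[l] fun s => Tneg β t - β * (s - t) :=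
  h.mono fun s hs => by simp only [Tneg, hs]; ring

theorem tendsto_Tneg_of_floor_eq {l : Filter ℝ} {t : ℝ} (hl : l ≤ 𝓝 t)
    (h : ∀ᶠ s in l, ⌊β * s⌋ = ⌊β * t⌋) : Tendsto (Tneg β) l (𝓝 (Tneg β t)) :=
  (((by fun_prop : Continuous fun s => Tneg β t - β * (s - t)).tendsto' t _ (by ring)).mono_left
    hl).congr' (Tneg_eventuallyEq_of_floor_eq h).symm

theorem tendsto_Tneg_nhdsGT (hβ : 0 < β) (t : ℝ) :
    Tendsto (Tneg β) (𝓝[>] t) (𝓝[<] (Tneg β t)) := by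
  have h := eventually_floor_eq_nhdsGT hβ t
  refine tendsto_nhdsWithin_iff.2 ⟨tendsto_Tneg_of_floor_eq nhdsWithin_le_nhds h, ?_⟩
  filter_upwards [Tneg_eventuallyEq_of_floor_eq h, self_mem_nhdsWithin] with s hs hts
  rw [hs, mem_Iio]
  nlinarith [mem_Ioi.1 hts]

theorem tendsto_Tneg_nhdsLT (hβ : 0 < β) {t : ℝ} (ht : Tneg β t ≠ 1) :
    Tendsto (Tneg β) (𝓝[<] t) (𝓝[>] (Tneg β t)) := by
  have h := eventually_floor_eq_nhdsLT hβ ht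
  refine tendsto_nhdsWithin_iff.2 ⟨tendsto_Tneg_of_floor_eq nhdsWithin_le_nhds h, ?_⟩
  filter_upwards [Tneg_eventuallyEq_of_floor_eq h, self_mem_nhdsWithin] with s hs hts
  rw [hs, mem_Ioi]
  nlinarith [mem_Iio.1 hts]

theorem eventually_dExp_succ_eq {l l' : Filter ℝ} {t : ℝ} {k : ℕ} (hT : Tendsto (Tneg β) l l')
    (hfloor : ∀ᶠ s in l, ⌊β * s⌋ = ⌊β * t⌋)
    (h : ∀ᶠ s in l', ∀ i < k, dExp β s i = dExp β (Tneg β t) i) :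
    ∀ᶠ s in l, ∀ i < k + 1, dExp β s i = dExp β t i := by
  filter_upwards [hfloor, hT.eventually h] with s hs hs'
  refine Nat.forall_lt_succ_left.2 ⟨by simp [dExp, hs], fun i hi => ?_⟩
  simpa only [dExp_add β _ i 1, Function.iterate_one] using hs' i hi

theorem eventually_dExp_eq (hβ : 0 < β) (k : ℕ) (t : ℝ) :
    ((∀ j ≤ k, Even j → (Tneg β)^[j] t ≠ 1) →
      ∀ᶠ s in 𝓝[>] t, ∀ i < k, dExp β s i = dExp β t i) ∧
    ((∀ j ≤ k, Odd j → (Tneg β)^[j] t ≠ 1) →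
      ∀ᶠ s in 𝓝[<] t, ∀ i < k, dExp β s i = dExp β t i) := by
  induction k generalizing t with
  | zero => simp
  | succ k ih =>
    refine ⟨fun h => ?_, fun h => ?_⟩
    · refine eventually_dExp_succ_eq (tendsto_Tneg_nhdsGT hβ t) (eventually_floor_eq_nhdsGT hβ t)
        ((ih (Tneg β t)).2 fun j hj hodd => ?_)
      exact h (j + 1) (by omega) hodd.add_one
    · have ht : Tneg β t ≠ 1 := h 1 (by omega) odd_one
      refine eventually_dExp_succ_eq (tendsto_Tneg_nhdsLT hβ ht) (eventually_floor_eq_nhdsLT hβ ht)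
        ((ih (Tneg β t)).1 fun j hj heven => ?_)
      exact h (j + 1) (by omega) heven.add_one

theorem exists_Ioo_forall_dExp_eq (hβ : 0 < β) (hodd : ∀ n, Odd n → (Tneg β)^[n] 1 ≠ 1)
    {t : ℝ} (ht : t ∈ Ioc 0 1) (k : ℕ) :
    ∃ p q, p < q ∧ Ioo p q ⊆ Ioo 0 1 ∧ ∀ s ∈ Ioo p q, ∀ i < k, dExp β s i = dExp β t i := by
  rcases Function.forall_even_or_forall_odd_iterate_ne hodd t with h | h
  · have ht1 : t < 1 := ht.2.lt_of_ne (h 0 Even.zero)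
    obtain ⟨q, hq, hsub⟩ := mem_nhdsGT_iff_exists_Ioo_subset.1
      (((eventually_dExp_eq hβ k t).1 fun j _ => h j).and (Ioo_mem_nhdsGT_of_mem ⟨ht.1.le, ht1⟩))
    exact ⟨t, q, hq, fun s hs => (hsub hs).2, fun s hs => (hsub hs).1⟩
  · obtain ⟨p, hp, hsub⟩ := mem_nhdsLT_iff_exists_Ioo_subset.1
      (((eventually_dExp_eq hβ k t).2 fun j _ => h j).and (Ioo_mem_nhdsLT_of_mem ht))
    exact ⟨p, t, hp, fun s hs => (hsub hs).2, fun s hs => (hsub hs).1⟩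

theorem exists_dExp_eq_of_mem_SigmaNegBeta {x : ℕ → ℕ} (hx : x ∈ SigmaNegBeta β) (k : ℕ) :
    ∃ t ∈ Ioc (0 : ℝ) 1, ∀ i < k, dExp β t i = x i := by
  have hU : IsOpen {y : ℕ → ℕ | ∀ i < k, y i = x i} :=
    isOpen_set_pi (s := fun i => {x i}) (finite_Iio k) fun _ _ => isOpen_discrete _
  obtain ⟨_, hy, t, ht, rfl⟩ := mem_closure_iff.1 hx _ hU fun _ _ => rfl
  exact ⟨t, ht, hy⟩

theorem exists_Ioo_forall_dExp_eq_of_mem_language (hβ : 0 < β)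
    (hodd : ∀ n, Odd n → (Tneg β)^[n] 1 ≠ 1) {k : ℕ} {v : ℕ → ℕ}
    (h : ∃ x ∈ SigmaNegBeta β, ∀ i < k, x i = v i) :
    ∃ p q, p < q ∧ Ioo p q ⊆ Ioo 0 1 ∧ ∀ s ∈ Ioo p q, ∀ i < k, dExp β s i = v i := by
  obtain ⟨x, hx, hxv⟩ := h
  obtain ⟨t, ht, htx⟩ := exists_dExp_eq_of_mem_SigmaNegBeta hx k
  obtain ⟨p, q, hpq, hsub, hdig⟩ := exists_Ioo_forall_dExp_eq hβ hodd ht k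
  exact ⟨p, q, hpq, hsub, fun s hs i hi => (hdig s hs i hi).trans ((htx i hi).trans (hxv i hi))⟩

end Cylinders

/-- If `β ≥ (1+√5)/2` and `d_{−β}(1)` is not periodic with odd period, then the
(−β)-shift is topologically mixing. -/
theorem neg_beta_shift_topologically_mixing (β : ℝ) (hβ : (1 + Real.sqrt 5) / 2 ≤ β)
    (hper : ¬ ∃ n : ℕ, 0 < n ∧ Odd n ∧ ∀ i, dExp β 1 (i + n) = dExp β 1 i)
    (nv : ℕ) (v : ℕ → ℕ) (hv : ∃ x ∈ SigmaNegBeta β, ∀ i < nv, x i = v i)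
    (nw : ℕ) (w : ℕ → ℕ) (hw : ∃ x ∈ SigmaNegBeta β, ∀ i < nw, x i = w i) :
    ∃ N : ℕ, ∀ n ≥ N, ∃ x ∈ SigmaNegBeta β,
      (∀ i < nv, x i = v i) ∧ ∀ i < nw, x (n + i) = w i := by
  have hodd : ∀ n, Odd n → (Tneg β)^[n] 1 ≠ 1 := fun n hn h1 =>
    hper ⟨n, hn.pos, hn, fun i => by rw [dExp_add, h1]⟩
  have hf : 0 < Int.fract β := by
    refine (Int.fract_nonneg β).lt_of_ne fun h => hodd 1 odd_one ?_
    rw [Function.iterate_one, Tneg_eq_one_sub_fract, mul_one, ← h, sub_zero]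
  have hβ1 : 1 < β := Real.one_lt_goldenRatio.trans_le hβ
  have hgold := add_one_le_sq_of_goldenRatio_le hβ
  have hβ0 : 0 < β := by linarith
  obtain ⟨p, q, hpq, hsub, hdv⟩ := exists_Ioo_forall_dExp_eq_of_mem_language hβ0 hodd hv
  obtain ⟨p', q', hpq', hsub', hdw⟩ := exists_Ioo_forall_dExp_eq_of_mem_language hβ0 hodd hw
  obtain ⟨N, hN⟩ := eventually_atTop.1 (eventually_Ioo_subset_image_iterate hβ1 hgold hf hpq)
  have hb : (p' + q') / 2 ∈ Ioo p' q' := ⟨by linarith, by linarith⟩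
  refine ⟨N, fun n hn => ?_⟩
  obtain ⟨x, hx, hxb⟩ := hN n hn (hsub' hb)
  refine ⟨dExp β x, subset_closure ⟨x, Ioo_subset_Ioc_self (hsub hx), rfl⟩,
    fun i hi => hdv x hx i hi, fun i hi => ?_⟩
  rw [add_comm, dExp_add, hxb]
  exact hdw _ hb i hi
end

section
/- Suppose d_{−β}(1) = b₁b₂⋯ is periodic with odd period n, and Σ_{−β} = {x : (1b₁⋯b_{n−1}(b_n − 1))^∞ ⪯ σ^k(x) ⪯ d_{−β}(1) for all k ≥ 0} with ⪯ the alternating order. Then for each 1 ≤ i ≤ n, the cylinder [b_i⋯b_{i+3n−1}] in Σ_{−β} is the singleton {(b_i⋯b_{i+n−1})^∞}. -/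
/-- The lower bound sequence `(1 b₁ ⋯ b_{n−1} (b_n − 1))^∞` (a periodic word of
length `n+1`), written with 0-based digits `b`. -/
def lowerSeq (b : ℕ → ℕ) (n : ℕ) : ℕ → ℕ :=
  fun i => if i % (n + 1) = 0 then 1
    else if i % (n + 1) = n then b (n - 1) - 1
    else b (i % (n + 1) - 1)

/-- The Ito–Sadahiro characterization of `Σ_{−β}` when `d_{−β}(1)` is periodic with
odd period `n`. -/
noncomputable def SigmaOddPer (β : ℝ) (n : ℕ) : Set (ℕ → ℕ) :=
  {x | ∀ k, altLe (lowerSeq (dExp β 1) n) (shift^[k] x) ∧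
    altLe (shift^[k] x) (dExp β 1)}

lemma Tneg_mem_Ioc (β y : ℝ) : Tneg β y ∈ Set.Ioc (0:ℝ) 1 := by
  have h1 : Tneg β y = 1 - Int.fract (β * y) := by
    unfold Tneg Int.fract; ring
  constructor
  · rw [h1]; have := Int.fract_lt_one (β * y); linarith
  · rw [h1]; have := Int.fract_nonneg (β * y); linarith

lemma iter_mem_Ioc {x : ℝ} (β : ℝ) (hx : x ∈ Set.Ioc (0:ℝ) 1) (m : ℕ) :
    (Tneg β)^[m] x ∈ Set.Ioc (0:ℝ) 1 := by
  cases m with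
  | zero => simpa using hx
  | succ m => rw [Function.iterate_succ_apply']; exact Tneg_mem_Ioc β _

lemma dExp_one_le (β x : ℝ) (k : ℕ) : 1 ≤ dExp β x k := by
  simp [dExp]

/-- `β y = d₀(y) - T y` for `y > 0`, `β > 0`. -/
lemma Tneg_digit {β : ℝ} (hβ : 0 < β) {y : ℝ} (hy : 0 < y) :
    β * y = (dExp β y 0 : ℝ) - Tneg β y := by
  have hfl : (0:ℤ) ≤ ⌊β * y⌋ := Int.floor_nonneg.2 (by positivity)
  have : ((dExp β y 0 : ℕ) : ℝ) = (⌊β * y⌋ : ℝ) + 1 := by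
    show ((((⌊β * ((Tneg β)^[0] y)⌋).toNat + 1 : ℕ)) : ℝ) = (⌊β * y⌋ : ℝ) + 1
    rw [Function.iterate_zero_apply]
    have h2 : ((⌊β * y⌋.toNat : ℕ) : ℝ) = (⌊β * y⌋ : ℝ) := by
      exact_mod_cast congrArg (Int.cast : ℤ → ℝ) (Int.toNat_of_nonneg hfl)
    rw [Nat.cast_add, Nat.cast_one, h2]
  rw [this, Tneg]; ring

lemma dExp_shift (β x : ℝ) (m k : ℕ) :
    dExp β x (k + m) = dExp β ((Tneg β)^[m] x) k := by
  simp [dExp, Function.iterate_add_apply]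

lemma diff_eq {β : ℝ} (hβ : 0 < β) {x y : ℝ} (hx : x ∈ Set.Ioc (0:ℝ) 1)
    (hy : y ∈ Set.Ioc (0:ℝ) 1) :
    ∀ m : ℕ, (∀ k < m, dExp β x k = dExp β y k) →
      β ^ m * (x - y) = (-1 : ℝ) ^ m * ((Tneg β)^[m] x - (Tneg β)^[m] y) := by
  intro m
  induction m with
  | zero => intro _; simp
  | succ m IH =>
    intro h
    have hIH := IH (fun k hk => h k (by omega))
    have hu : (0:ℝ) < (Tneg β)^[m] x := (iter_mem_Ioc β hx m).1
    have hv : (0:ℝ) < (Tneg β)^[m] y := (iter_mem_Ioc β hy m).1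
    have hdu := Tneg_digit hβ hu
    have hdv := Tneg_digit hβ hv
    have hd : dExp β ((Tneg β)^[m] x) 0 = dExp β ((Tneg β)^[m] y) 0 := by
      rw [← dExp_shift, ← dExp_shift]
      simpa using h m (by omega)
    rw [Function.iterate_succ_apply', Function.iterate_succ_apply']
    calc β ^ (m+1) * (x - y) = β * (β ^ m * (x - y)) := by ring
      _ = (-1:ℝ)^m * (β * (Tneg β)^[m] x - β * (Tneg β)^[m] y) := by rw [hIH]; ring
      _ = (-1:ℝ)^m * (((dExp β ((Tneg β)^[m] x) 0 : ℝ) - Tneg β ((Tneg β)^[m] x))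
            - ((dExp β ((Tneg β)^[m] y) 0 : ℝ) - Tneg β ((Tneg β)^[m] y))) := by
            rw [← hdu, ← hdv]
      _ = (-1:ℝ)^(m+1) * (Tneg β ((Tneg β)^[m] x) - Tneg β ((Tneg β)^[m] y)) := by
            rw [hd]; ring

lemma dExp_inj {β : ℝ} (hβ : 1 < β) {x y : ℝ} (hx : x ∈ Set.Ioc (0:ℝ) 1)
    (hy : y ∈ Set.Ioc (0:ℝ) 1) (h : dExp β x = dExp β y) : x = y := by
  have hβ0 : (0:ℝ) < β := by linarith
  have key : ∀ m : ℕ, |x - y| ≤ (β⁻¹) ^ m := by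
    intro m
    have hd := diff_eq hβ0 hx hy m (fun k _ => congrFun h k)
    have hux := iter_mem_Ioc β hx m
    have huy := iter_mem_Ioc β hy m
    have habs : |(Tneg β)^[m] x - (Tneg β)^[m] y| ≤ 1 := by
      rw [abs_le]
      constructor <;> [linarith [hux.1, huy.2]; linarith [hux.2, huy.1]]
    have h2 : |β ^ m * (x - y)| ≤ 1 := by
      rw [hd, abs_mul, abs_pow, abs_neg, abs_one, one_pow, one_mul]
      exact habs
    rw [abs_mul, abs_pow, abs_of_pos hβ0] at h2
    have hbm : (0:ℝ) < β ^ m := by positivity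
    rw [inv_pow]
    rw [inv_eq_one_div, le_div_iff₀ hbm]
    nlinarith [abs_nonneg (x - y)]
  have htend : Filter.Tendsto (fun m : ℕ => (β⁻¹) ^ m) Filter.atTop (nhds 0) := by
    apply tendsto_pow_atTop_nhds_zero_of_lt_one
    · positivity
    · exact inv_lt_one_of_one_lt₀ hβ
  have h0 : |x - y| ≤ 0 := ge_of_tendsto' htend key
  have := abs_nonneg (x - y)
  have : |x - y| = 0 := le_antisymm h0 this
  have := abs_eq_zero.mp this
  linarith [sub_eq_zero.mp this, (rfl : x = x)]

lemma lt_of_altLt_dExp {β : ℝ} (hβ : 1 < β) {x y : ℝ} (hx : x ∈ Set.Ioc (0:ℝ) 1)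
    (hy : y ∈ Set.Ioc (0:ℝ) 1) (h : altLt (dExp β x) (dExp β y)) : x < y := by
  have hβ0 : (0:ℝ) < β := by linarith
  obtain ⟨j, hpre, hsign⟩ := h
  have hd := diff_eq hβ0 hx hy j hpre
  have hu := iter_mem_Ioc β hx j
  have hv := iter_mem_Ioc β hy j
  have hdu := Tneg_digit hβ0 hu.1
  have hdv := Tneg_digit hβ0 hv.1
  have hdx : dExp β ((Tneg β)^[j] x) 0 = dExp β x j := by
    rw [← dExp_shift]; simp
  have hdy : dExp β ((Tneg β)^[j] y) 0 = dExp β y j := by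
    rw [← dExp_shift]; simp
  rw [hdx] at hdu; rw [hdy] at hdv
  have hux := Tneg_mem_Ioc β ((Tneg β)^[j] x)
  have huy := Tneg_mem_Ioc β ((Tneg β)^[j] y)
  have hkey : β ^ (j+1) * (x - y)
      = (-1:ℝ)^j * (((dExp β x j : ℝ) - (dExp β y j : ℝ))
          - (Tneg β ((Tneg β)^[j] x) - Tneg β ((Tneg β)^[j] y))) := by
    calc β ^ (j+1) * (x - y) = β * (β ^ j * (x - y)) := by ring
      _ = (-1:ℝ)^j * (β * (Tneg β)^[j] x - β * (Tneg β)^[j] y) := by rw [hd]; ring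
      _ = _ := by rw [hdu, hdv]; ring
  have hbp : (0:ℝ) < β ^ (j+1) := by positivity
  have hfinal : β ^ (j+1) * (x - y) < 0 := by
    rcases Nat.even_or_odd j with hj | hj
    · have hs : ((-1:ℤ))^(j+1) = -1 := by
        rw [pow_succ, hj.neg_one_pow]; ring
      rw [hs] at hsign
      have : (dExp β x j : ℤ) < dExp β y j := by linarith
      have hcast : (dExp β x j : ℝ) + 1 ≤ (dExp β y j : ℝ) := by exact_mod_cast this
      rw [hkey, hj.neg_one_pow, one_mul]
      linarith [hux.1, hux.2, huy.1, huy.2]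
    · have hs : ((-1:ℤ))^(j+1) = 1 := by
        rw [pow_succ, hj.neg_one_pow]; ring
      rw [hs, one_mul] at hsign
      have : (dExp β y j : ℤ) < dExp β x j := by linarith
      have hcast : (dExp β y j : ℝ) + 1 ≤ (dExp β x j : ℝ) := by exact_mod_cast this
      rw [hkey, hj.neg_one_pow]
      have hbracket : (0:ℝ) < ((dExp β x j : ℝ) - (dExp β y j : ℝ))
          - (Tneg β ((Tneg β)^[j] x) - Tneg β ((Tneg β)^[j] y)) := by
        linarith [hux.1, hux.2, huy.1, huy.2]
      nlinarith
  nlinarith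

lemma altLt_or {u v : ℕ → ℕ} (h : u ≠ v) : altLt u v ∨ altLt v u := by
  classical
  have hex : ∃ j, u j ≠ v j := by
    by_contra h'; push_neg at h'; exact h (funext h')
  set j := Nat.find hex with hj
  have hjne : u j ≠ v j := Nat.find_spec hex
  have hpre : ∀ k < j, u k = v k := by
    intro k hk
    by_contra h''
    exact absurd h'' (by simpa using Nat.find_min hex hk)
  have hne : ((v j : ℤ) - (u j : ℤ)) ≠ 0 := by
    intro h0
    have h1 : (v j : ℤ) = (u j : ℤ) := sub_eq_zero.mp h0
    have h2 : v j = u j := by exact_mod_cast h1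
    exact hjne h2.symm
  have hsne : ((-1:ℤ))^(j+1) * ((v j : ℤ) - (u j : ℤ)) ≠ 0 :=
    mul_ne_zero (pow_ne_zero _ (by norm_num)) hne
  rcases lt_or_gt_of_ne hsne with hlt | hgt
  · exact Or.inl ⟨j, hpre, hlt⟩
  · right
    refine ⟨j, fun k hk => (hpre k hk).symm, ?_⟩
    have : ((-1:ℤ))^(j+1) * ((u j : ℤ) - (v j : ℤ))
        = -(((-1:ℤ))^(j+1) * ((v j : ℤ) - (u j : ℤ))) := by ring
    rw [this]; linarith

lemma altLe_dExp_of_le {β : ℝ} (hβ : 1 < β) {x y : ℝ} (hx : x ∈ Set.Ioc (0:ℝ) 1)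
    (hy : y ∈ Set.Ioc (0:ℝ) 1) (hxy : x ≤ y) : altLe (dExp β x) (dExp β y) := by
  by_cases h : dExp β x = dExp β y
  · exact Or.inl h
  · rcases altLt_or h with h' | h'
    · exact Or.inr h'
    · exact absurd (lt_of_altLt_dExp hβ hy hx h') (by linarith)

/-- Sign extraction at a known first-difference position. -/
lemma altLt_sign_at {u v : ℕ → ℕ} (h : altLt u v) {r : ℕ}
    (hpre : ∀ k < r, u k = v k) (hne : u r ≠ v r) :
    ((-1:ℤ))^(r+1) * ((v r : ℤ) - (u r : ℤ)) < 0 := by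
  obtain ⟨j, hjpre, hjsign⟩ := h
  rcases lt_trichotomy j r with hlt | heq | hgt
  · exfalso
    have := hpre j hlt
    rw [this, sub_self, mul_zero] at hjsign
    exact lt_irrefl 0 hjsign
  · rwa [heq] at hjsign
  · exact absurd (hjpre r hgt) hne

lemma altLe_sign_at {u v : ℕ → ℕ} (h : altLe u v) {r : ℕ}
    (hpre : ∀ k < r, u k = v k) (hne : u r ≠ v r) :
    ((-1:ℤ))^(r+1) * ((v r : ℤ) - (u r : ℤ)) < 0 := by
  rcases h with h | h
  · exact absurd (congrFun h r) hne
  · exact altLt_sign_at h hpre hne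

lemma shift_iterate (f : ℕ → ℕ) (k j : ℕ) : shift^[k] f j = f (j + k) := by
  induction k generalizing f j with
  | zero => simp
  | succ k IH =>
    rw [Function.iterate_succ_apply, IH]
    rfl

lemma shift_dExp (β : ℝ) (x : ℝ) (k : ℕ) :
    shift^[k] (dExp β x) = dExp β ((Tneg β)^[k] x) := by
  funext j
  rw [shift_iterate, dExp_shift]

/-- Flip under one left-shift (for getting the lower bound from the shifted one). -/
lemma altLe_flip_shift {u v : ℕ → ℕ} (h : altLe (shift u) (shift v)) (h0 : v 0 = u 0) :
    altLe v u := by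
  rcases h with h | h
  · left
    funext k
    cases k with
    | zero => exact h0
    | succ k => exact (congrFun h k).symm
  · right
    obtain ⟨j, hpre, hsign⟩ := h
    refine ⟨j + 1, ?_, ?_⟩
    · intro k hk
      cases k with
      | zero => exact h0
      | succ k => exact (hpre k (by omega)).symm
    · have hsign' : ((-1:ℤ))^(j+1) * ((v (j+1) : ℤ) - (u (j+1) : ℤ)) < 0 := hsign
      calc ((-1:ℤ))^(j+1+1) * ((u (j+1) : ℤ) - (v (j+1) : ℤ))
          = ((-1:ℤ))^(j+1) * ((v (j+1) : ℤ) - (u (j+1) : ℤ)) := by ring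
        _ < 0 := hsign'


section SL

variable {b : ℕ → ℕ} {n : ℕ}

lemma sl_lt (hn : 0 < n) {k : ℕ} (hk : k + 1 < n) : shift (lowerSeq b n) k = b k := by
  show lowerSeq b n (k + 1) = b k
  unfold lowerSeq
  rw [Nat.mod_eq_of_lt (by omega : k + 1 < n + 1)]
  rw [if_neg (by omega), if_neg (by omega)]
  simp

lemma sl_pen (hn : 0 < n) : shift (lowerSeq b n) (n - 1) = b (n - 1) - 1 := by
  show lowerSeq b n (n - 1 + 1) = b (n - 1) - 1
  unfold lowerSeq
  rw [show n - 1 + 1 = n by omega, Nat.mod_eq_of_lt (by omega : n < n + 1)]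
  rw [if_neg (by omega), if_pos rfl]

lemma sl_n : shift (lowerSeq b n) n = 1 := by
  show lowerSeq b n (n + 1) = 1
  unfold lowerSeq
  rw [Nat.mod_self, if_pos rfl]

lemma sl_per (k : ℕ) : shift (lowerSeq b n) (k + (n + 1)) = shift (lowerSeq b n) k := by
  show lowerSeq b n (k + (n + 1) + 1) = lowerSeq b n (k + 1)
  unfold lowerSeq
  rw [show k + (n + 1) + 1 = (k + 1) + (n + 1) by omega, Nat.add_mod_right]

lemma lowerSeq_zero : lowerSeq b n 0 = 1 := by
  unfold lowerSeq
  rw [Nat.zero_mod, if_pos rfl]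

end SL

section Per

variable {β : ℝ} {n : ℕ}

lemma B_add_mul (hper : ∀ i, dExp β 1 (i + n) = dExp β 1 i) (q t : ℕ) :
    dExp β 1 (t + n * q) = dExp β 1 t := by
  induction q with
  | zero => simp
  | succ q IH =>
    rw [show t + n * (q + 1) = (t + n * q) + n by ring, hper, IH]

end Per

lemma iter_pos {β : ℝ} (m : ℕ) {x : ℝ} (hx : 0 < x) : 0 < (Tneg β)^[m] x := by
  cases m with
  | zero => simpa using hx
  | succ m => rw [Function.iterate_succ_apply']; exact (Tneg_mem_Ioc β _).1

lemma claimC {β : ℝ} (hβ : 1 < β) {n : ℕ} (hn : 0 < n) (hodd : Odd n)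
    (hper : ∀ i, dExp β 1 (i + n) = dExp β 1 i) :
    ∀ j : ℕ, ∀ y : ℝ, 0 < y → y < 1 →
      (∀ k < j, dExp β y k = shift (lowerSeq (dExp β 1) n) k) →
      dExp β y j ≠ shift (lowerSeq (dExp β 1) n) j →
      altLt (dExp β y) (shift (lowerSeq (dExp β 1) n)) := by
  have hβ0 : (0:ℝ) < β := by linarith
  have h1Ioc : (1:ℝ) ∈ Set.Ioc (0:ℝ) 1 := ⟨one_pos, le_refl 1⟩
  intro j
  induction j using Nat.strong_induction_on with
  | _ j IH =>
  intro y hy0 hy1 hpre hne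
  have hyIoc : y ∈ Set.Ioc (0:ℝ) 1 := ⟨hy0, le_of_lt hy1⟩
  by_cases hbig : n + 1 ≤ j
  · -- recursion: prefix contains the full word of length n+1
    set y' := (Tneg β)^[n+1] y with hy'
    have hy'Ioc : y' ∈ Set.Ioc (0:ℝ) 1 := by
      rw [hy', Function.iterate_succ_apply']; exact Tneg_mem_Ioc β _
    have han : dExp β y n = 1 := by rw [hpre n (by omega), sl_n]
    have hy'lt : y' < 1 := by
      rcases lt_or_eq_of_le hy'Ioc.2 with h | h
      · exact h
      · exfalso
        set v := (Tneg β)^[n] y with hv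
        have hvpos : 0 < v := iter_pos n hy0
        have hd : dExp β v 0 = 1 := by
          rw [hv, ← dExp_shift]; simpa using han
        have hfl : ⌊β * v⌋ = 0 := by
          have h0 : (⌊β * v⌋).toNat = 0 := by
            have : (⌊β * ((Tneg β)^[0] v)⌋).toNat + 1 = 1 := hd
            simpa using this
          have h1 : (0:ℤ) ≤ ⌊β * v⌋ := Int.floor_nonneg.2 (by positivity)
          omega
        have hTv : Tneg β v = 1 - β * v := by
          rw [Tneg]; rw [hfl]; push_cast; ring
        have hTv1 : Tneg β v = 1 := by
          rw [hv, show Tneg β ((Tneg β)^[n] y) = (Tneg β)^[n+1] y from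
            (Function.iterate_succ_apply' (Tneg β) n y).symm]
          exact h
        nlinarith
    have hpre' : ∀ k < j - (n+1), dExp β y' k = shift (lowerSeq (dExp β 1) n) k := by
      intro k hk
      have e1 : dExp β y' k = dExp β y (k + (n+1)) := by rw [hy', ← dExp_shift]
      rw [e1, hpre (k + (n+1)) (by omega), sl_per]
    have hne' : dExp β y' (j - (n+1)) ≠ shift (lowerSeq (dExp β 1) n) (j - (n+1)) := by
      have e1 : dExp β y' (j - (n+1)) = dExp β y j := by
        rw [hy', ← dExp_shift]; congr 1; omega
      have e2 : shift (lowerSeq (dExp β 1) n) (j - (n+1))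
          = shift (lowerSeq (dExp β 1) n) j := by
        conv_rhs => rw [show j = (j - (n+1)) + (n+1) by omega]
        rw [sl_per]
      rw [e1, e2]; exact hne
    obtain ⟨j₂, hpre₂, hsign₂⟩ :=
      IH (j - (n+1)) (by omega) y' hy'Ioc.1 hy'lt hpre' hne'
    refine ⟨j₂ + (n+1), ?_, ?_⟩
    · intro k hk
      by_cases hk1 : k < n + 1
      · exact hpre k (by omega)
      · have e1 : dExp β y k = dExp β y' (k - (n+1)) := by
          rw [hy', ← dExp_shift]; congr 1; omega
        have e2 : shift (lowerSeq (dExp β 1) n) (k - (n+1))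
            = shift (lowerSeq (dExp β 1) n) k := by
          conv_rhs => rw [show k = (k - (n+1)) + (n+1) by omega]
          rw [sl_per]
        rw [e1, ← e2]
        exact hpre₂ (k - (n+1)) (by omega)
    · have e1 : dExp β y (j₂ + (n+1)) = dExp β y' j₂ := by
        rw [hy', ← dExp_shift]
      have e2 : shift (lowerSeq (dExp β 1) n) (j₂ + (n+1))
          = shift (lowerSeq (dExp β 1) n) j₂ := sl_per j₂
      rw [e1, e2]
      have hpow : ((-1:ℤ))^(j₂ + (n+1) + 1) = ((-1:ℤ))^(j₂+1) := by
        rw [show j₂ + (n+1) + 1 = (j₂ + 1) + (n+1) by omega, pow_add,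
          (hodd.add_one).neg_one_pow, mul_one]
      rw [hpow]
      exact hsign₂
  · -- j ≤ n
    push_neg at hbig
    have hltb : altLt (dExp β y) (dExp β 1) := by
      rcases altLe_dExp_of_le hβ hyIoc h1Ioc (le_of_lt hy1) with h | h
      · exfalso
        have := dExp_inj hβ hyIoc h1Ioc h
        rw [this] at hy1; exact lt_irrefl 1 hy1
      · exact h
    obtain ⟨m₀, hm₀pre, hm₀sign⟩ := hltb
    have hm₀ne : dExp β y m₀ ≠ dExp β 1 m₀ := by
      intro hh; rw [hh, sub_self, mul_zero] at hm₀sign; exact lt_irrefl 0 hm₀sign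
    by_cases hjn : j = n
    · subst hjn
      refine ⟨j, hpre, ?_⟩
      rw [sl_n] at hne ⊢
      have h1 : 1 ≤ dExp β y j := dExp_one_le β y j
      have hpow : ((-1:ℤ))^(j+1) = 1 := (hodd.add_one).neg_one_pow
      rw [hpow, one_mul]
      have h2 : 2 ≤ dExp β y j := by omega
      have : (2:ℤ) ≤ (dExp β y j : ℤ) := by exact_mod_cast h2
      push_cast
      linarith
    by_cases hjn1 : j = n - 1
    · subst hjn1
      rcases lt_trichotomy m₀ (n-1) with hlt | heq | hgt
      · exfalso
        have := hpre m₀ hlt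
        rw [sl_lt hn (by omega)] at this
        exact hm₀ne this
      · subst heq
        refine ⟨n - 1, hpre, ?_⟩
        rw [sl_pen hn] at hne ⊢
        have h1le : 1 ≤ dExp β 1 (n-1) := dExp_one_le β 1 (n-1)
        have hcast : ((dExp β 1 (n-1) - 1 : ℕ) : ℤ) = (dExp β 1 (n-1) : ℤ) - 1 := by
          push_cast [h1le]; ring
        rw [hcast]
        have hpow : ((-1:ℤ))^((n-1)+1) = -1 := by
          rw [show (n-1) + 1 = n by omega]; exact hodd.neg_one_pow
        rw [hpow] at hm₀sign ⊢
        omega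
      · exfalso
        set z := (Tneg β)^[n] y with hz
        have hzIoc : z ∈ Set.Ioc (0:ℝ) 1 := iter_mem_Ioc β hyIoc n
        have hzgt : altLt (dExp β 1) (dExp β z) := by
          refine ⟨m₀ - n, ?_, ?_⟩
          · intro k hk
            have e1 : dExp β z k = dExp β y (k + n) := by rw [hz, ← dExp_shift]
            calc dExp β 1 k = dExp β 1 (k + n) := (hper k).symm
              _ = dExp β y (k + n) := (hm₀pre (k + n) (by omega)).symm
              _ = dExp β z k := e1.symm
          · have e1 : dExp β z (m₀ - n) = dExp β y m₀ := by
              rw [hz, ← dExp_shift]; congr 1; omega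
            have e2 : dExp β 1 (m₀ - n) = dExp β 1 m₀ := by
              conv_rhs => rw [show m₀ = (m₀ - n) + n by omega]
              rw [hper]
            rw [e1, e2]
            have hpow : ((-1:ℤ))^(m₀+1) = -((-1:ℤ))^(m₀-n+1) := by
              rw [show m₀ + 1 = (m₀ - n + 1) + n by omega, pow_add,
                hodd.neg_one_pow]; ring
            calc ((-1:ℤ))^(m₀-n+1) * ((dExp β y m₀ : ℤ) - (dExp β 1 m₀ : ℤ))
                = ((-1:ℤ))^(m₀+1) * ((dExp β 1 m₀ : ℤ) - (dExp β y m₀ : ℤ)) := by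
                  rw [hpow]; ring
              _ < 0 := hm₀sign
        have := lt_of_altLt_dExp hβ h1Ioc hzIoc hzgt
        linarith [hzIoc.2]
    · have hj1 : j + 1 < n := by omega
      have hm : m₀ = j := by
        rcases lt_trichotomy m₀ j with h | h | h
        · exfalso
          have := hpre m₀ h
          rw [sl_lt hn (by omega)] at this
          exact hm₀ne this
        · exact h
        · exfalso
          have := hm₀pre j h
          rw [← sl_lt (b := dExp β 1) hn hj1] at this
          exact hne this
      subst hm
      refine ⟨m₀, hpre, ?_⟩
      rw [sl_lt hn hj1]
      exact hm₀sign

lemma claimD {β : ℝ} (hβ : 1 < β) {n : ℕ} (hn : 0 < n) (hodd : Odd n)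
    (hper : ∀ i, dExp β 1 (i + n) = dExp β 1 i) {y : ℝ}
    (hy : y ∈ Set.Ioc (0:ℝ) 1) :
    altLe (lowerSeq (dExp β 1) n) (dExp β y) := by
  have hβ0 : (0:ℝ) < β := by linarith
  have hy0 : 0 < y := hy.1
  have hd1 := dExp_one_le β y 0
  by_cases h : dExp β y 0 = 1
  · -- first digit is 1: flip via claimC on T y
    have hfl : ⌊β * y⌋ = 0 := by
      have h0 : (⌊β * y⌋).toNat = 0 := by
        have : (⌊β * ((Tneg β)^[0] y)⌋).toNat + 1 = 1 := h
        simpa using this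
      have h1 : (0:ℤ) ≤ ⌊β * y⌋ := Int.floor_nonneg.2 (by positivity)
      omega
    have hTy : Tneg β y = 1 - β * y := by
      rw [Tneg, hfl]; push_cast; ring
    have hTylt : Tneg β y < 1 := by
      have : 0 < β * y := by positivity
      rw [hTy]; linarith
    have hTypos : 0 < Tneg β y := (Tneg_mem_Ioc β y).1
    have hC : altLe (dExp β (Tneg β y)) (shift (lowerSeq (dExp β 1) n)) := by
      by_cases heq : dExp β (Tneg β y) = shift (lowerSeq (dExp β 1) n)
      · exact Or.inl heq
      · right
        have hex : ∃ k, dExp β (Tneg β y) k ≠ shift (lowerSeq (dExp β 1) n) k := by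
          by_contra h'
          push_neg at h'
          exact heq (funext h')
        classical
        refine claimC hβ hn hodd hper (Nat.find hex) (Tneg β y) hTypos hTylt
          (fun k hk => ?_) (Nat.find_spec hex)
        by_contra h''
        exact absurd h'' (by simpa using Nat.find_min hex hk)
    have hshift : shift (dExp β y) = dExp β (Tneg β y) := by
      funext k
      show dExp β y (k + 1) = dExp β (Tneg β y) k
      rw [dExp_shift β y 1 k, Function.iterate_one]
    apply altLe_flip_shift (u := dExp β y) (v := lowerSeq (dExp β 1) n)
    · rw [hshift]
      exact hC
    · rw [lowerSeq_zero, h]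
  · right
    refine ⟨0, by omega, ?_⟩
    rw [lowerSeq_zero, pow_one]
    have h2 : 2 ≤ dExp β y 0 := by omega
    have : (2:ℤ) ≤ (dExp β y 0 : ℤ) := by exact_mod_cast h2
    push_cast
    linarith

lemma per_mem {β : ℝ} (hβ : 1 < β) {n : ℕ} (hn : 0 < n) (hodd : Odd n)
    (hper : ∀ i, dExp β 1 (i + n) = dExp β 1 i) (i : ℕ) :
    (fun j => dExp β 1 (i + j)) ∈ SigmaOddPer β n := by
  have h1Ioc : (1:ℝ) ∈ Set.Ioc (0:ℝ) 1 := ⟨one_pos, le_refl 1⟩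
  intro k
  have hw : shift^[k] (fun j => dExp β 1 (i + j)) = dExp β ((Tneg β)^[i + k] 1) := by
    funext t
    rw [shift_iterate]
    show dExp β 1 (i + (t + k)) = _
    rw [show i + (t + k) = t + (i + k) by omega, dExp_shift]
  have hmem := iter_mem_Ioc β h1Ioc (i + k)
  constructor
  · rw [hw]
    exact claimD hβ hn hodd hper hmem
  · rw [hw]
    exact altLe_dExp_of_le hβ hmem h1Ioc hmem.2
/-- If `d_{−β}(1)` is periodic with odd period `n`, then each cylinder
`[b_i ⋯ b_{i+3n−1}]` in `Σ_{−β}` is the singleton `{(b_i ⋯ b_{i+n−1})^∞}`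
(0-based: `i < n`). -/
theorem cylinder_singleton_of_odd_period (β : ℝ) (hβ : 1 < β) (n : ℕ)
    (hn : 0 < n) (hodd : Odd n) (hper : ∀ i, dExp β 1 (i + n) = dExp β 1 i)
    (i : ℕ) (hi : i < n) :
    {x ∈ SigmaOddPer β n | ∀ j < 3 * n, x j = dExp β 1 (i + j)} =
      {fun j => dExp β 1 (i + j)} := by
  ext x
  simp only [Set.mem_setOf_eq, Set.mem_singleton_iff]
  constructor
  · rintro ⟨hS, h3⟩
    funext j
    show x j = dExp β 1 (i + j)
    induction j using Nat.strong_induction_on with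
    | _ j IHj =>
    by_cases hj3 : j < 3 * n
    · exact h3 j hj3
    · push_neg at hj3
      by_contra hcon
      obtain ⟨q, r, hdm, hrn⟩ : ∃ q r, n * q + r = i + j ∧ r < n :=
        ⟨(i+j)/n, (i+j)%n, Nat.div_add_mod _ _, Nat.mod_lt _ hn⟩
      obtain ⟨q', rfl⟩ : ∃ q', q = q' + 1 := by
        refine ⟨q - 1, ?_⟩
        rcases Nat.eq_zero_or_pos q with h0 | h0
        · exfalso; subst h0; simp at hdm; omega
        · omega
      have hmul : n * (q' + 1) = n * q' + n := by ring
      rw [hmul] at hdm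
      set M := n * q' with hM
      have hBper1 : ∀ t, dExp β 1 (t + (M + n)) = dExp β 1 t := by
        intro t
        rw [show t + (M + n) = t + n * (q' + 1) by rw [hM, hmul]]
        exact B_add_mul hper (q' + 1) t
      have hBper2 : ∀ t, dExp β 1 (t + M) = dExp β 1 t := fun t => by
        rw [hM]; exact B_add_mul hper q' t
      set k₁ := j - r with hk₁
      set k₂ := j - (r + n) with hk₂
      have hjk₁ : r + k₁ = j := by omega
      have hjk₂ : (r + n) + k₂ = j := by omega
      have hiK₁ : i + k₁ = M + n := by omega
      have hiK₂ : i + k₂ = M := by omega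
      -- first constraint
      have hs1 : ((-1:ℤ))^(r+1) * ((dExp β 1 r : ℤ) - (shift^[k₁] x r : ℤ)) < 0 := by
        refine altLe_sign_at (hS k₁).2 (fun t ht => ?_) ?_
        · rw [shift_iterate, IHj (t + k₁) (by omega),
            show i + (t + k₁) = t + (M + n) by omega, hBper1 t]
        · rw [shift_iterate, hjk₁]
          intro hh
          apply hcon
          rw [hh, show i + j = r + (M + n) by omega, hBper1 r]
      have hs2 : ((-1:ℤ))^((r+n)+1) * ((dExp β 1 (r+n) : ℤ) - (shift^[k₂] x (r+n) : ℤ)) < 0 := by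
        refine altLe_sign_at (hS k₂).2 (fun t ht => ?_) ?_
        · rw [shift_iterate, IHj (t + k₂) (by omega),
            show i + (t + k₂) = t + M by omega, hBper2 t]
        · rw [shift_iterate, hjk₂]
          intro hh
          apply hcon
          rw [hh, hper r, show i + j = r + (M + n) by omega, hBper1 r]
      rw [shift_iterate, hjk₁] at hs1
      rw [shift_iterate, hjk₂, hper r] at hs2
      have hpow : ((-1:ℤ))^((r+n)+1) = -((-1:ℤ))^(r+1) := by
        rw [show (r+n)+1 = (r+1)+n by omega, pow_add, hodd.neg_one_pow]; ring
      rw [hpow] at hs2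
      have : ((-1:ℤ))^(r+1) * ((dExp β 1 r : ℤ) - (x j : ℤ)) +
          -((-1:ℤ))^(r+1) * ((dExp β 1 r : ℤ) - (x j : ℤ)) = 0 := by ring
      linarith
  · rintro rfl
    exact ⟨per_mem hβ hn hodd hper i, fun j _ => rfl⟩
end

section
/- Let b ≥ 1 and N ≥ 1 be integers, and let A = (a_{ij})_{i,j≥1} be an infinite 0–1 matrix satisfying: a_{i,i+1} = 1 for all i; a_{ij} = 0 whenever j ≠ i+1 and j > i − N; and each row has at most b nonzero entries. Define a_1^{(n)} = Σ_j (A^n)_{1j} (the number of paths of length n starting at vertex 1 in the associated directed graph). Then limsup_{n→∞} (1/n) log a_1^{(n)} ≤ (2/N) log b + (2/N) log N. -/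
open Filter

/-- The number of directed paths of length `n` starting at vertex `0` in the countable
graph with adjacency matrix `a` (this equals `Σ_j (A^n)_{0j}`). -/
noncomputable def pathCount (a : ℕ → ℕ → ℕ) (n : ℕ) : ℕ :=
  Nat.card {p : Fin (n + 1) → ℕ //
    p 0 = 0 ∧ ∀ i : Fin n, a (p i.castSucc) (p i.succ) = 1}

/-
A path from `0` either steps up `v → v + 1` or jumps down by more than `N`; since it never goes
below `0`, at most `n / (N + 1)` of its `n` steps are jumps. Recording each step as `none` (up)
or as the index of the target among the at most `b - 1` other successors encodes paths injectively
by words in `Option (Fin (b - 1))` of length `n` with few `some` letters. Weighting a word by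
`x ^ (number of jumps)` with `x ≤ 1` gives
`pathCount a n · x ^ (n / (N + 1)) ≤ (1 + (b - 1) x) ^ n`, and `x = 1 / (b N)` yields `log (pathCount a n) ≤ (n / N) (2 log b + log N)`.
-/

open Finset

theorem Fin.sum_succ_sub_castSucc {G : Type*} [AddCommGroup G] :
    ∀ {n : ℕ} (f : Fin (n + 1) → G), ∑ i : Fin n, (f i.succ - f i.castSucc) = f (last n) - f 0
  | 0, _ => by simp
  | n + 1, f => by
    rw [Fin.sum_univ_castSucc, Fin.succ_last]
    simpa [← Fin.succ_castSucc] using congrArg (· + (f (last (n + 1)) - f (last n).castSucc))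
      (Fin.sum_succ_sub_castSucc fun i : Fin (n + 1) => f i.castSucc)

theorem sum_pow_card_isSome {ι α R : Type*} [Fintype ι] [DecidableEq ι] [Fintype α]
    [CommSemiring R] (x : R) :
    ∑ c : ι → Option α, x ^ #{i | (c i).isSome} = (1 + Fintype.card α * x) ^ Fintype.card ι := by
  have hprod (c : ι → Option α) : x ^ #{i | (c i).isSome} = ∏ i, (c i).elim 1 fun _ => x := by
    rw [← prod_const, prod_filter]
    exact prod_congr rfl fun i _ => by cases c i <;> simp
  simp_rw [hprod]
  rw [← Fintype.prod_sum (κ := fun _ => Option α) (fun _ o => o.elim (1 : R) fun _ => x)]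
  simp [Fintype.sum_option]

theorem card_isSome_le_mul_pow_le {ι α R : Type*} [Fintype ι] [DecidableEq ι] [Fintype α]
    [CommSemiring R] [PartialOrder R] [IsOrderedRing R] {x : R} (hx0 : 0 ≤ x) (hx1 : x ≤ 1)
    (m : ℕ) :
    (#{c : ι → Option α | #{i | (c i).isSome} ≤ m} : R) * x ^ m ≤
      (1 + Fintype.card α * x) ^ Fintype.card ι := by
  calc (#{c : ι → Option α | #{i | (c i).isSome} ≤ m} : R) * x ^ m
      = ∑ c : ι → Option α with #{i | (c i).isSome} ≤ m, x ^ m := by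
        rw [sum_const, nsmul_eq_mul]
    _ ≤ ∑ c : ι → Option α with #{i | (c i).isSome} ≤ m, x ^ #{i | (c i).isSome} :=
        sum_le_sum fun c hc => pow_le_pow_of_le_one hx0 hx1 (mem_filter.1 hc).2
    _ ≤ ∑ c : ι → Option α, x ^ #{i | (c i).isSome} :=
        sum_le_sum_of_subset_of_nonneg (filter_subset _ _) fun _ _ _ => pow_nonneg hx0 _
    _ = (1 + Fintype.card α * x) ^ Fintype.card ι := sum_pow_card_isSome x

abbrev RootedPath (a : ℕ → ℕ → ℕ) (n : ℕ) :=
  {p : Fin (n + 1) → ℕ // p 0 = 0 ∧ ∀ i : Fin n, a (p i.castSucc) (p i.succ) = 1}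

def jumps {n : ℕ} (p : Fin (n + 1) → ℕ) : Finset (Fin n) := {i | p i.succ ≠ p i.castSucc + 1}

theorem mem_jumps {n : ℕ} {p : Fin (n + 1) → ℕ} {i : Fin n} :
    i ∈ jumps p ↔ p i.succ ≠ p i.castSucc + 1 := by
  simp [jumps]

section Paths

variable {a : ℕ → ℕ → ℕ} {n : ℕ}

theorem card_jumps_mul_le {N : ℕ} (hdesc : ∀ v w, a v w = 1 → w ≠ v + 1 → w + N ≤ v)
    (p : RootedPath a n) : #(jumps p.1) * (N + 1) ≤ n := by
  obtain ⟨p, hp0, hpa⟩ := p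
  have hstep (i : Fin n) :
      (p i.succ : ℤ) - p i.castSucc ≤ 1 - (N + 1) * if i ∈ jumps p then 1 else 0 := by
    split_ifs with hi
    · have := hdesc _ _ (hpa i) (mem_jumps.1 hi)
      omega
    · have := not_not.1 (mem_jumps.not.1 hi)
      omega
  have hsum := sum_le_sum fun i (_ : i ∈ univ) => hstep i
  rw [Fin.sum_succ_sub_castSucc fun j => (p j : ℤ), sum_sub_distrib, ← mul_sum, sum_boole] at hsum
  simp only [hp0, sum_const, card_univ, Fintype.card_fin, filter_mem_eq_inter, univ_inter,
    nsmul_eq_mul, mul_one] at hsum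
  push_cast at hsum
  zify
  linarith

noncomputable section Encoding

variable {C : ℕ} (t : ℕ → Finset ℕ) (ht : ∀ v, #(t v) ≤ C)

def stepCode (v w : ℕ) : Option (Fin C) :=
  if h : w ∈ t v then some (Fin.castLE (ht v) ((t v).equivFin ⟨w, h⟩)) else none

theorem stepCode_eq_none {v w : ℕ} : stepCode t ht v w = none ↔ w ∉ t v := by
  unfold stepCode; split_ifs <;> simp_all

theorem stepCode_injOn (v : ℕ) : Set.InjOn (stepCode t ht v) (t v) := by
  intro w (hw : w ∈ t v) w' (hw' : w' ∈ t v) h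
  rw [stepCode, stepCode, dif_pos hw, dif_pos hw'] at h
  exact congrArg Subtype.val
    ((t v).equivFin.injective (Fin.castLE_injective _ (Option.some_injective _ h)))

def pathCode (p : RootedPath a n) (i : Fin n) : Option (Fin C) :=
  stepCode t ht (p.1 i.castSucc) (p.1 i.succ)

variable {t}

theorem isSome_pathCode_iff (hnext : ∀ v, v + 1 ∉ t v)
    (hsupp : ∀ v w, a v w = 1 → w ≠ v + 1 → w ∈ t v) (p : RootedPath a n) (i : Fin n) :
    (pathCode t ht p i).isSome ↔ i ∈ jumps p.1 := by
  rw [← Option.ne_none_iff_isSome, Ne, pathCode, stepCode_eq_none, not_not, mem_jumps]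
  constructor
  · intro h heq
    exact hnext _ (heq ▸ h)
  · exact hsupp _ _ (p.2.2 i)

theorem pathCode_injective (hnext : ∀ v, v + 1 ∉ t v)
    (hsupp : ∀ v w, a v w = 1 → w ≠ v + 1 → w ∈ t v) :
    Function.Injective (pathCode (a := a) (n := n) t ht) := by
  intro p q hpq
  refine Subtype.ext (funext fun k => ?_)
  induction k using Fin.induction with
  | zero => rw [p.2.1, q.2.1]
  | succ i ih =>
    have hi := congrFun hpq i
    by_cases hp : i ∈ jumps p.1
    · have hq : i ∈ jumps q.1 := by
        rwa [← isSome_pathCode_iff ht hnext hsupp, ← hi, isSome_pathCode_iff ht hnext hsupp]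
      rw [pathCode, pathCode, ← ih] at hi
      exact stepCode_injOn t ht _ (hsupp _ _ (p.2.2 i) (mem_jumps.1 hp))
        (ih ▸ hsupp _ _ (q.2.2 i) (mem_jumps.1 hq)) hi
    · have hq : i ∉ jumps q.1 := by
        rwa [← isSome_pathCode_iff ht hnext hsupp, ← hi, isSome_pathCode_iff ht hnext hsupp]
      rw [not_not.1 (mem_jumps.not.1 hp), not_not.1 (mem_jumps.not.1 hq), ih]

end Encoding

theorem pathCount_mul_pow_le {C : ℕ} {t : ℕ → Finset ℕ} (ht : ∀ v, #(t v) ≤ C)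
    (hnext : ∀ v, v + 1 ∉ t v) (hsupp : ∀ v w, a v w = 1 → w ≠ v + 1 → w ∈ t v) {N : ℕ}
    (hdesc : ∀ v w, a v w = 1 → w ≠ v + 1 → w + N ≤ v)
    {x : ℝ} (hx0 : 0 ≤ x) (hx1 : x ≤ 1) :
    (pathCount a n : ℝ) * x ^ (n / (N + 1)) ≤ (1 + C * x) ^ n := by
  have hsparse (p : RootedPath a n) : #{i | (pathCode t ht p i).isSome} ≤ n / (N + 1) := by
    have hsupport : ({i | (pathCode t ht p i).isSome} : Finset (Fin n)) = jumps p.1 := by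
      ext i
      simp [isSome_pathCode_iff ht hnext hsupp]
    rw [hsupport, Nat.le_div_iff_mul_le (Nat.succ_pos N)]
    exact card_jumps_mul_le hdesc p
  have hcount :
      pathCount a n ≤ #{c : Fin n → Option (Fin C) | #{i | (c i).isSome} ≤ n / (N + 1)} := by
    rw [← Nat.card_eq_finsetCard]
    exact Nat.card_le_card_of_injective
      (fun p => ⟨pathCode t ht p, mem_filter.2 ⟨mem_univ _, hsparse p⟩⟩)
      fun p q h => pathCode_injective ht hnext hsupp (congrArg Subtype.val h)
  calc (pathCount a n : ℝ) * x ^ (n / (N + 1))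
      ≤ #{c : Fin n → Option (Fin C) | #{i | (c i).isSome} ≤ n / (N + 1)} *
          x ^ (n / (N + 1)) := by
        gcongr
    _ ≤ (1 + C * x) ^ n := by
        simpa using card_isSome_le_mul_pow_le (ι := Fin n) (α := Fin C) hx0 hx1 (n / (N + 1))

theorem log_one_add_sub_one_mul_inv_le {b N : ℝ} (hb : 1 ≤ b) (hN : 0 < N) :
    Real.log (1 + (b - 1) * (b * N)⁻¹) ≤ Real.log b / N :=
  calc Real.log (1 + (b - 1) * (b * N)⁻¹) ≤ (b - 1) * (b * N)⁻¹ := by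
        linarith [Real.log_le_sub_one_of_pos (x := 1 + (b - 1) * (b * N)⁻¹)
          (by have := sub_nonneg.2 hb; positivity)]
    _ = (1 - b⁻¹) / N := by field_simp
    _ ≤ Real.log b / N := by gcongr; exact Real.one_sub_inv_le_log_of_pos (by positivity)

theorem log_pathCount_le {b N : ℕ} (hb : 1 ≤ b) (hN : 1 ≤ N) {t : ℕ → Finset ℕ}
    (ht : ∀ v, #(t v) ≤ b - 1) (hnext : ∀ v, v + 1 ∉ t v)
    (hsupp : ∀ v w, a v w = 1 → w ≠ v + 1 → w ∈ t v)
    (hdesc : ∀ v w, a v w = 1 → w ≠ v + 1 → w + N ≤ v) (n : ℕ) :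
    Real.log (pathCount a n) ≤ n / N * (2 * Real.log b + Real.log N) := by
  have hbR : (1 : ℝ) ≤ b := by exact_mod_cast hb
  have hNR : (1 : ℝ) ≤ N := by exact_mod_cast hN
  have hlogb := Real.log_nonneg hbR
  have hlogN := Real.log_nonneg hNR
  rcases (pathCount a n).eq_zero_or_pos with h0 | hpos
  · rw [h0, Nat.cast_zero, Real.log_zero]
    positivity
  have hcount := pathCount_mul_pow_le ht hnext hsupp hdesc (x := (b * N)⁻¹) (by positivity)
    (inv_le_one_of_one_le₀ (one_le_mul_of_one_le_of_one_le hbR hNR)) (n := n)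
  have hlog := Real.log_le_log (by positivity) hcount
  rw [Real.log_mul (by positivity) (by positivity), Real.log_pow, Real.log_pow, Real.log_inv,
    Real.log_mul (by positivity) (by positivity), Nat.cast_sub hb, Nat.cast_one] at hlog
  have hsteps : (n : ℝ) * Real.log (1 + (b - 1) * ((b : ℝ) * N)⁻¹) ≤ n * (Real.log b / N) := by
    gcongr
    exact log_one_add_sub_one_mul_inv_le hbR (by positivity)
  have hjumps : ((n / (N + 1) : ℕ) : ℝ) * (Real.log b + Real.log N) ≤
      n / N * (Real.log b + Real.log N) := by
    gcongr
    exact Nat.cast_div_le.trans (by gcongr; linarith)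
  calc Real.log (pathCount a n) ≤ n * (Real.log b / N) + n / N * (Real.log b + Real.log N) := by
        linarith
    _ = n / N * (2 * Real.log b + Real.log N) := by ring

end Paths

theorem path_count_growth_estimate_general (b N : ℕ) (hb : 1 ≤ b) (hN : 1 ≤ N)
    (a : ℕ → ℕ → ℕ)
    (hsuper : ∀ i, a i (i + 1) = 1)
    (hzero : ∀ i j : ℕ, j ≠ i + 1 → (i : ℤ) - N < (j : ℤ) → a i j = 0)
    (hrow : ∀ i, ∃ s : Finset ℕ, s.card ≤ b ∧ ∀ j, a i j ≠ 0 → j ∈ s) :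
    limsup (fun n : ℕ => Real.log (pathCount a n) / n) atTop ≤
      (2 / N) * Real.log b + (2 / N) * Real.log N := by
  choose s hs_card hs_mem using hrow
  have hdesc (v w : ℕ) (hvw : a v w = 1) (hw : w ≠ v + 1) : w + N ≤ v := by
    by_contra h
    exact one_ne_zero (hvw ▸ hzero v w hw (by omega))
  have hsupp (v w : ℕ) (hvw : a v w = 1) (hw : w ≠ v + 1) : w ∈ (s v).erase (v + 1) :=
    mem_erase.2 ⟨hw, hs_mem v w (by omega)⟩
  have ht (v : ℕ) : #((s v).erase (v + 1)) ≤ b - 1 := by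
    rw [card_erase_of_mem (hs_mem v _ (by rw [hsuper]; exact one_ne_zero))]
    exact Nat.sub_le_sub_right (hs_card v) 1
  have hbound (n : ℕ) := log_pathCount_le hb hN ht (fun v => notMem_erase _ _) hsupp hdesc n
  refine limsup_le_of_le (isCoboundedUnder_le_of_le atTop fun n =>
    div_nonneg (Real.log_natCast_nonneg _) n.cast_nonneg) ?_
  filter_upwards [eventually_gt_atTop 0] with n hn
  rw [div_le_iff₀ (by exact_mod_cast hn)]
  have hlogN := Real.log_nonneg (show (1 : ℝ) ≤ N by exact_mod_cast hN)
  calc Real.log (pathCount a n) ≤ n / N * (2 * Real.log b + Real.log N) := hbound n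
    _ ≤ n / N * (2 * Real.log b + 2 * Real.log N) := by gcongr; linarith
    _ = (2 / N * Real.log b + 2 / N * Real.log N) * n := by ring

/-- Combinatorial core of the entropy estimate: for a 0–1 matrix with the
superdiagonal full, zero entries strictly above the `N`-th subdiagonal (except the
superdiagonal) and at most `b` nonzero entries in each row, the exponential growth
rate of the number of paths from the first vertex is at most
`(2/N) log b + (2/N) log N`. -/
theorem path_count_growth_estimate (b N : ℕ) (hb : 1 ≤ b) (hN : 1 ≤ N)
    (a : ℕ → ℕ → ℕ)
    (h01 : ∀ i j, a i j ≤ 1)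
    (hsuper : ∀ i, a i (i + 1) = 1)
    (hzero : ∀ i j : ℕ, j ≠ i + 1 → (i : ℤ) - N < (j : ℤ) → a i j = 0)
    (hrow : ∀ i, ∃ s : Finset ℕ, s.card ≤ b ∧ ∀ j, a i j ≠ 0 → j ∈ s) :
    limsup (fun n : ℕ => Real.log (pathCount a n) / n) atTop ≤
      (2 / N) * Real.log b + (2 / N) * Real.log N :=
  path_count_growth_estimate_general b N hb hN a hsuper hzero hrow
end

section
/- Let b be an alternately shift maximal sequence and (G_b, φ) its labelled graph presentation with vertices {V₀,V₁,…} and k(·) as above. Then for any word w in the language of Σ_b with k(w) = k, the follower set F^w equals the set of infinite labelled paths in G_b started at V_k; in particular, Σ_b equals the set of infinite labelled paths started at V₀. -/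
def extendWord (n : ℕ) (w : ℕ → ℕ) (a : ℕ) : ℕ → ℕ :=
  fun t => if t < n then w t else a

def Edge (b : ℕ → ℕ) (i j a : ℕ) : Prop :=
  ∃ n w, InLanguage b n w ∧ KIs b n w i ∧
    InLanguage b (n + 1) (extendWord n w a) ∧ KIs b (n + 1) (extendWord n w a) j

/-- The set of infinite labelled paths in `G_b` started at vertex `V_k`. -/
def InfinitePathsFrom (b : ℕ → ℕ) (k : ℕ) : Set (ℕ → ℕ) :=
  {x | ∃ vs : ℕ → ℕ, vs 0 = k ∧ ∀ t, Edge b (vs t) (vs (t + 1)) (x t)}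

namespace AltAux

lemma shift_it (x : ℕ → ℕ) (m t : ℕ) : (shift^[m] x) t = x (t + m) := by
  induction m generalizing x t with
  | zero => rfl
  | succ m ih =>
    rw [Function.iterate_succ_apply, ih]
    rfl

/-- local admissibility of a word of length `n` -/
def Adm (b : ℕ → ℕ) (n : ℕ) (w : ℕ → ℕ) : Prop :=
  (∀ i < n, w i ∈ Finset.Icc 1 (b 0)) ∧
  ∀ m < n, (∀ i < n - m, w (m + i) = b i) ∨
    ∃ j < n - m, (∀ i < j, w (m + i) = b i) ∧
      (-1 : ℤ) ^ (j + 1) * ((b j : ℤ) - (w (m + j) : ℤ)) < 0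

lemma adm_congr {b : ℕ → ℕ} {n : ℕ} {w w' : ℕ → ℕ}
    (h : ∀ i < n, w i = w' i) (hA : Adm b n w) : Adm b n w' := by
  obtain ⟨h1, h2⟩ := hA
  constructor
  · intro i hi; rw [← h i hi]; exact h1 i hi
  · intro m hm
    rcases h2 m hm with hfull | ⟨j, hj, hagree, hsign⟩
    · left; intro i hi; rw [← h (m + i) (by omega)]; exact hfull i hi
    · right; exact ⟨j, hj, fun i hi => by rw [← h (m + i) (by omega)]; exact hagree i hi,
        by rw [← h (m + j) (by omega)]; exact hsign⟩

lemma suffixMatch_congr {b : ℕ → ℕ} {n : ℕ} {w w' : ℕ → ℕ}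
    (h : ∀ i < n, w i = w' i) {k : ℕ} (hS : SuffixMatch b n w k) : SuffixMatch b n w' k := by
  obtain ⟨hk, hm⟩ := hS
  exact ⟨hk, fun i hi => by rw [← h (n - k + i) (by omega)]; exact hm i hi⟩

lemma kIs_congr {b : ℕ → ℕ} {n : ℕ} {w w' : ℕ → ℕ}
    (h : ∀ i < n, w i = w' i) {k : ℕ} (hK : KIs b n w k) : KIs b n w' k := by
  have h' : ∀ i < n, w' i = w i := fun i hi => (h i hi).symm
  exact ⟨suffixMatch_congr h hK.1, fun k' hk' => hK.2 k' (suffixMatch_congr h' hk')⟩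

lemma inLanguage_congr {b : ℕ → ℕ} {n : ℕ} {w w' : ℕ → ℕ}
    (h : ∀ i < n, w i = w' i) (hL : InLanguage b n w) : InLanguage b n w' := by
  obtain ⟨x, hx, hag⟩ := hL
  exact ⟨x, hx, fun k hk => by rw [← h k hk]; exact hag k hk⟩

lemma lang_to_adm {b : ℕ → ℕ} {n : ℕ} {w : ℕ → ℕ} (hL : InLanguage b n w) : Adm b n w := by
  obtain ⟨x, ⟨hxc, hxs⟩, hag⟩ := hL
  constructor
  · intro i hi; rw [← hag i hi]; exact hxc i
  · intro m hm
    rcases hxs m with heq | ⟨j, hagree, hsign⟩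
    · left; intro i hi
      have h1 := congrFun heq i
      rw [shift_it] at h1
      rw [← hag (m + i) (by omega), Nat.add_comm m i]
      exact h1
    · by_cases hj : j < n - m
      · right
        refine ⟨j, hj, fun i hi => ?_, ?_⟩
        · have h1 := hagree i hi; rw [shift_it] at h1
          rw [← hag (m + i) (by omega), Nat.add_comm m i]
          exact h1
        · rw [shift_it] at hsign
          rw [← hag (m + j) (by omega), Nat.add_comm m j]
          exact hsign
      · left; intro i hi
        have h1 := hagree i (by omega); rw [shift_it] at h1
        rw [← hag (m + i) (by omega), Nat.add_comm m i]
        exact h1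

lemma kIs_exists (b : ℕ → ℕ) (n : ℕ) (w : ℕ → ℕ) :
    KIs b n w (Nat.findGreatest (fun k => k ≤ n ∧ ∀ i < k, w (n - k + i) = b i) n) := by
  set P : ℕ → Prop := fun k => k ≤ n ∧ ∀ i < k, w (n - k + i) = b i with hP
  have hP0 : P 0 := ⟨Nat.zero_le n, fun i hi => by omega⟩
  have hspec : P (Nat.findGreatest P n) :=
    Nat.findGreatest_spec (Nat.zero_le n) hP0
  refine ⟨hspec, fun k' hk' => Nat.le_findGreatest hk'.1 hk'⟩

lemma kIs_unique {b : ℕ → ℕ} {n : ℕ} {w : ℕ → ℕ} {k k' : ℕ}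
    (h : KIs b n w k) (h' : KIs b n w k') : k = k' :=
  le_antisymm (h'.2 k h.1) (h.2 k' h'.1)

lemma sigma_mem_of_adm {b : ℕ → ℕ} (hb : AltShiftMaximal b) {n : ℕ} {w : ℕ → ℕ} {k : ℕ}
    (hA : Adm b n w) (hK : KIs b n w k) : concatWord n w (shift^[k] b) ∈ SigmaB b := by
  obtain ⟨⟨hkn, hkm⟩, hkmax⟩ := hK
  set x : ℕ → ℕ := concatWord n w (shift^[k] b) with hx
  have hxval : ∀ t, x t = if t < n then w t else b (t - n + k) := by
    intro t
    by_cases h : t < n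
    · simp [hx, concatWord, h]
    · simp [hx, concatWord, h, shift_it]
  constructor
  · intro t
    rw [hxval]
    by_cases h : t < n
    · simpa [h] using hA.1 t h
    · simpa [h] using hb.1 (t - n + k)
  · intro m
    by_cases hmn : n ≤ m
    · have : shift^[m] x = shift^[k + (m - n)] b := by
        funext t
        rw [shift_it, shift_it, hxval]
        have h1 : ¬ (t + m < n) := by omega
        simp only [h1, if_false]
        congr 1; omega
      rw [this]; exact hb.2 _
    · push_neg at hmn
      rcases hA.2 m hmn with hfull | ⟨j, hj, hagree, hsign⟩
      · -- suffix of length l = n - m fully matches prefix of b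
        set l := n - m with hl
        have hSl : SuffixMatch b n w l := by
          refine ⟨by omega, fun i hi => ?_⟩
          have : n - l + i = m + i := by omega
          rw [this]; exact hfull i hi
        have hlk : l ≤ k := hkmax l hSl
        by_cases hlek : l = k
        · left
          funext t
          rw [shift_it, hxval]
          by_cases ht : t + m < n
          · rw [if_pos ht]
            have h2 := hfull t (by omega)
            rwa [Nat.add_comm m t] at h2
          · rw [if_neg ht]
            congr 1; omega
        · -- l < k, border case: shift^[m] x = shift^[k - l] b
          have hlltk : l < k := by omega
          have hborder : ∀ i < l, b (k - l + i) = b i := by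
            intro i hi
            have h1 : w (n - k + (k - l + i)) = b (k - l + i) := hkm (k - l + i) (by omega)
            have h2 : n - k + (k - l + i) = m + i := by omega
            rw [h2] at h1
            rw [← h1]
            exact hfull i (by omega)
          have : shift^[m] x = shift^[k - l] b := by
            funext t
            rw [shift_it, shift_it, hxval]
            by_cases ht : t + m < n
            · rw [if_pos ht]
              have h3 : t < l := by omega
              rw [Nat.add_comm t m, hfull t (by omega), ← hborder t h3]
              congr 1; omega
            · rw [if_neg ht]
              congr 1; omega
          rw [this]; exact hb.2 _
      · right
        refine ⟨j, fun i hi => ?_, ?_⟩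
        · rw [shift_it, hxval, if_pos (by omega : i + m < n)]
          rw [Nat.add_comm i m]; exact hagree i hi
        · rw [shift_it, hxval, if_pos (by omega : j + m < n)]
          rw [Nat.add_comm j m]; exact hsign

lemma adm_to_lang {b : ℕ → ℕ} (hb : AltShiftMaximal b) {n : ℕ} {w : ℕ → ℕ}
    (hA : Adm b n w) : InLanguage b n w := by
  obtain hK := kIs_exists b n w
  exact ⟨concatWord n w (shift^[_] b), sigma_mem_of_adm hb hA hK,
    fun t ht => by simp [concatWord, ht]⟩

/-- prefix-suffix (border) relation of `b`, determined by `b` only -/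
def PrefSuffix (b : ℕ → ℕ) (k l : ℕ) : Prop := l ≤ k ∧ ∀ t < l, b (k - l + t) = b t

lemma match_char {b : ℕ → ℕ} {n : ℕ} {w : ℕ → ℕ} {k : ℕ} (hK : KIs b n w k) :
    ∀ l, SuffixMatch b n w l ↔ PrefSuffix b k l := by
  intro l
  have hkn : k ≤ n := hK.1.1
  constructor
  · intro hS
    have hlk : l ≤ k := hK.2 l hS
    refine ⟨hlk, fun t ht => ?_⟩
    have h1 : w (n - k + (k - l + t)) = b (k - l + t) := hK.1.2 (k - l + t) (by omega)
    have h2 : n - k + (k - l + t) = n - l + t := by omega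
    rw [h2] at h1
    rw [← h1]
    exact hS.2 t ht
  · rintro ⟨hlk, hps⟩
    refine ⟨by omega, fun t ht => ?_⟩
    have h1 : w (n - l + t) = b (k - l + t) := by
      have := hK.1.2 (k - l + t) (by omega)
      have h2 : n - k + (k - l + t) = n - l + t := by omega
      rwa [h2] at this
    rw [h1]; exact hps t ht

/-- admissible one-letter extension, as seen from state `k` -/
def AdmStep (b : ℕ → ℕ) (k a : ℕ) : Prop :=
  a ∈ Finset.Icc 1 (b 0) ∧
  ∀ l, PrefSuffix b k l → a = b l ∨ (-1 : ℤ) ^ (l + 1) * ((b l : ℤ) - (a : ℤ)) < 0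

lemma step_adm {b : ℕ → ℕ} {n : ℕ} {u : ℕ → ℕ} {k a : ℕ}
    (hA : Adm b n u) (hK : KIs b n u k) :
    Adm b (n + 1) (extendWord n u a) ↔ AdmStep b k a := by
  set e := extendWord n u a with he
  have heval : ∀ t, e t = if t < n then u t else a := fun t => rfl
  have hkn : k ≤ n := hK.1.1
  constructor
  · intro hE
    constructor
    · have := hE.1 n (by omega)
      rwa [heval, if_neg (by omega)] at this
    · intro l hps
      have hS : SuffixMatch b n u l := (match_char hK l).mpr hps
      have hln : l ≤ n := hS.1
      rcases hE.2 (n - l) (by omega) with hfull | ⟨j, hj, hagree, hsign⟩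
      · left
        have := hfull l (by omega)
        rwa [heval, if_neg (by omega)] at this
      · have hjl : j = l := by
          by_contra hne
          have hjlt : j < l := by omega
          have h1 := hagree
          have h2 : e (n - l + j) = b j := by
            rw [heval, if_pos (by omega)]
            exact hS.2 j hjlt
          rw [h2] at hsign
          simp at hsign
        right
        rw [hjl] at hsign
        rwa [heval, if_neg (by omega)] at hsign
  · intro hS
    constructor
    · intro t ht
      rw [heval]
      by_cases h : t < n
      · rw [if_pos h]; exact hA.1 t h
      · rw [if_neg h]; exact hS.1
    · intro m hm
      by_cases hmn : m = n
      · subst hmn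
        rcases hS.2 0 ⟨Nat.zero_le k, fun t ht => by omega⟩ with h0 | h0
        · left; intro i hi
          have : i = 0 := by omega
          subst this
          rw [heval, if_neg (by omega)]; exact h0
        · right
          exact ⟨0, by omega, fun i hi => by omega,
            by rw [heval, if_neg (by omega)]; exact h0⟩
      · have hmn' : m < n := by omega
        rcases hA.2 m hmn' with hfull | ⟨j, hj, hagree, hsign⟩
        · set l := n - m with hl
          have hSl : SuffixMatch b n u l := by
            refine ⟨by omega, fun i hi => ?_⟩
            rw [show n - l + i = m + i by omega]
            exact hfull i hi
          have hps : PrefSuffix b k l := (match_char hK l).mp hSl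
          rcases hS.2 l hps with hbl | hbl
          · left
            intro i hi
            rw [heval]
            by_cases h : i < l
            · rw [if_pos (by omega)]; exact hfull i h
            · have : i = l := by omega
              subst this
              rw [if_neg (by omega)]; exact hbl
          · right
            refine ⟨l, by omega, fun i hi => ?_, ?_⟩
            · rw [heval, if_pos (by omega)]; exact hfull i hi
            · rw [heval, if_neg (by omega)]
              exact hbl
        · right
          refine ⟨j, by omega, fun i hi => ?_, ?_⟩
          · rw [heval, if_pos (by omega)]; exact hagree i hi
          · rw [heval, if_pos (by omega)]; exact hsign

lemma step_match {b : ℕ → ℕ} {n : ℕ} {u : ℕ → ℕ} {k a : ℕ} (hK : KIs b n u k) :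
    ∀ k', SuffixMatch b (n + 1) (extendWord n u a) k' ↔
      (k' = 0 ∨ (1 ≤ k' ∧ k' - 1 ≤ k ∧ PrefSuffix b k (k' - 1) ∧ a = b (k' - 1))) := by
  intro k'
  set e := extendWord n u a with he
  have heval : ∀ t, e t = if t < n then u t else a := fun t => rfl
  have hkn : k ≤ n := hK.1.1
  constructor
  · intro hS
    by_cases hk0 : k' = 0
    · left; exact hk0
    · right
      have hk1 : 1 ≤ k' := by omega
      set l := k' - 1 with hl
      have hln : l ≤ n := by have := hS.1; omega
      have ha : a = b l := by
        have := hS.2 l (by omega)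
        rwa [heval, if_neg (by omega)] at this
      have hSu : SuffixMatch b n u l := by
        refine ⟨hln, fun i hi => ?_⟩
        have := hS.2 i (by omega)
        rwa [heval, show n + 1 - k' = n - l by omega, if_pos (by omega)] at this
      have hps := (match_char hK l).mp hSu
      exact ⟨hk1, hps.1, hps, ha⟩
  · rintro (hk0 | ⟨hk1, hlk, hps, ha⟩)
    · subst hk0; exact ⟨by omega, fun i hi => by omega⟩
    · set l := k' - 1 with hl
      have hSu : SuffixMatch b n u l := (match_char hK l).mpr hps
      refine ⟨by omega, fun i hi => ?_⟩
      rw [heval]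
      by_cases h : i < l
      · rw [show n + 1 - k' = n - l by omega] at *
        rw [if_pos (by omega)]
        exact hSu.2 i h
      · have : i = l := by omega
        subst this
        rw [if_neg (by omega), ha]

lemma edge_extend {b : ℕ → ℕ} (hb : AltShiftMaximal b) {i j a n : ℕ} {u : ℕ → ℕ}
    (hE : Edge b i j a) (hL : InLanguage b n u) (hK : KIs b n u i) :
    InLanguage b (n + 1) (extendWord n u a) ∧ KIs b (n + 1) (extendWord n u a) j := by
  obtain ⟨n0, w0, hL0, hK0, hL1, hK1⟩ := hE
  have hA0 : Adm b n0 w0 := lang_to_adm hL0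
  have hAe0 : Adm b (n0 + 1) (extendWord n0 w0 a) := lang_to_adm hL1
  have hstep : AdmStep b i a := (step_adm hA0 hK0).mp hAe0
  have hA : Adm b n u := lang_to_adm hL
  have hAe : Adm b (n + 1) (extendWord n u a) := (step_adm hA hK).mpr hstep
  have hmatch : ∀ k', SuffixMatch b (n + 1) (extendWord n u a) k' ↔
      SuffixMatch b (n0 + 1) (extendWord n0 w0 a) k' := by
    intro k'
    rw [step_match hK, step_match hK0]
  have hKj : KIs b (n + 1) (extendWord n u a) j :=
    ⟨(hmatch j).mpr hK1.1, fun k' hk' => hK1.2 k' ((hmatch k').mp hk')⟩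
  exact ⟨adm_to_lang hb hAe, hKj⟩

lemma sigma_shift {b : ℕ → ℕ} {z : ℕ → ℕ} (hz : z ∈ SigmaB b) (n : ℕ) :
    shift^[n] z ∈ SigmaB b := by
  constructor
  · intro t; rw [shift_it]; exact hz.1 (t + n)
  · intro m
    rw [← Function.iterate_add_apply]
    exact hz.2 (m + n)

end AltAux

section MainProof
open AltAux

lemma extend_concat_agree (n t : ℕ) (w x : ℕ → ℕ) :
    ∀ s < n + t + 1, extendWord (n + t) (concatWord n w x) (x t) s = concatWord n w x s := by
  intro s hs
  show (if s < n + t then concatWord n w x s else x t) = concatWord n w x s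
  by_cases h : s < n + t
  · rw [if_pos h]
  · rw [if_neg h]
    have hs' : s = n + t := by omega
    subst hs'
    show x t = if n + t < n then w (n + t) else x (n + t - n)
    rw [if_neg (by omega)]
    congr 1; omega

theorem follower_set_eq_paths (b : ℕ → ℕ) (hb : AltShiftMaximal b) :
    (∀ n w k, InLanguage b n w → KIs b n w k →
      FollowerSet b n w = InfinitePathsFrom b k) ∧
    SigmaB b = InfinitePathsFrom b 0 := by
  have main : ∀ n w k, InLanguage b n w → KIs b n w k →
      FollowerSet b n w = InfinitePathsFrom b k := by
    intro n w k hL hK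
    ext x
    set z := concatWord n w x with hz
    have hzval : ∀ s, z s = if s < n then w s else x (s - n) := fun s => rfl
    have hzw : ∀ i < n, w i = z i := fun i hi => by rw [hzval, if_pos hi]
    have hext : ∀ t s, s < n + t + 1 → extendWord (n + t) z (x t) s = z s :=
      fun t s hs => extend_concat_agree n t w x s hs
    constructor
    · rintro ⟨hxS, hzS⟩
      refine ⟨fun t => Nat.findGreatest
        (fun k => k ≤ n + t ∧ ∀ i < k, z (n + t - k + i) = b i) (n + t), ?_, ?_⟩
      · have h1 : KIs b (n + 0) z
            (Nat.findGreatest (fun k => k ≤ n + 0 ∧ ∀ i < k, z (n + 0 - k + i) = b i) (n + 0)) :=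
          kIs_exists b (n + 0) z
        have h2 : KIs b n z k := kIs_congr hzw hK
        exact kIs_unique h1 h2
      · intro t
        refine ⟨n + t, z, ⟨z, hzS, fun _ _ => rfl⟩, kIs_exists b (n + t) z,
          ⟨z, hzS, fun s hs => (hext t s hs).symm⟩, ?_⟩
        exact kIs_congr (fun i hi => (hext t i hi).symm) (kIs_exists b (n + (t + 1)) z)
    · rintro ⟨vs, hvs0, hedge⟩
      have hstep : ∀ t, InLanguage b (n + t) z ∧ KIs b (n + t) z (vs t) := by
        intro t
        induction t with
        | zero =>
          refine ⟨inLanguage_congr hzw hL, ?_⟩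
          rw [hvs0]
          exact kIs_congr hzw hK
        | succ t ih =>
          obtain ⟨hLt, hKt⟩ := ih
          obtain ⟨hL', hK'⟩ := edge_extend hb (hedge t) hLt hKt
          have hag : ∀ i < n + t + 1, extendWord (n + t) z (x t) i = z i :=
            fun i hi => hext t i hi
          exact ⟨inLanguage_congr hag hL', kIs_congr hag hK'⟩
      have hzS : z ∈ SigmaB b := by
        constructor
        · intro s
          exact (lang_to_adm (hstep (s + 1)).1).1 s (by omega)
        · intro m
          by_cases heq : shift^[m] z = b
          · left; exact heq
          · right
            have hex : ∃ j, z (m + j) ≠ b j := by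
              by_contra hc
              push_neg at hc
              exact heq (funext fun t => by
                rw [shift_it, Nat.add_comm]; exact hc t)
            set j := Nat.find hex with hjdef
            have hjne : z (m + j) ≠ b j := Nat.find_spec hex
            have hjmin : ∀ i < j, z (m + i) = b i := fun i hi =>
              not_not.mp (Nat.find_min hex hi)
            have hA := lang_to_adm (hstep (m + j + 1)).1
            rcases hA.2 m (by omega) with hfull | ⟨j', hj', hagree, hsign⟩
            · exact absurd (hfull j (by omega)) hjne
            · have hj'j : j' = j := by
                rcases lt_trichotomy j' j with h | h | h
                · rw [hjmin j' h] at hsign; simp at hsign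
                · exact h
                · exact absurd (hagree j h) hjne
              subst hj'j
              refine ⟨j, fun i hi => ?_, ?_⟩
              · rw [shift_it, Nat.add_comm i m]; exact hjmin i hi
              · rw [shift_it, Nat.add_comm j m]; exact hsign
      have hxz : x = shift^[n] z := by
        funext t
        rw [shift_it, hzval, if_neg (by omega)]
        congr 1; omega
      have hxS : x ∈ SigmaB b := hxz ▸ sigma_shift hzS n
      exact ⟨hxS, hzS⟩
  refine ⟨main, ?_⟩
  have hbS : b ∈ SigmaB b := ⟨hb.1, hb.2⟩
  have hL0 : InLanguage b 0 (fun _ => 0) := ⟨b, hbS, fun k hk => by omega⟩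
  have hK0 : KIs b 0 (fun _ => 0) 0 :=
    ⟨⟨le_refl 0, fun i hi => by omega⟩, fun k' hk' => hk'.1⟩
  rw [← main 0 (fun _ => 0) 0 hL0 hK0]
  ext x
  have hcx : concatWord 0 (fun _ => 0) x = x := funext fun i => by
    show (if i < 0 then (0:ℕ) else x (i - 0)) = x i
    rw [if_neg (by omega)]
    congr 1
  constructor
  · intro hx
    exact ⟨hx, by rw [hcx]; exact hx⟩
  · rintro ⟨hx, _⟩
    exact hx

end MainProof
end
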